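/- arXiv:1701.05987 — 8 statements merged into one kernel-verified Lean document; each statement's English description precedes it below -/
import Mathlib

section
/- Let G be a countable group and let λ be an isolated left order on G. Then any homomorphism ρ : G → Homeo₊(ℝ) that is tight at a point x₀ and realizes λ at x₀ is cocompact: there is a compact interval I ⊆ ℝ such that every ρ(G)-orbit intersects I. -/
/-- A left-invariant strict total order on a group `G`. -/
structure LeftOrder (G : Type*) [Group G] where
  lt : G → G → Prop
  irrefl : ∀ g, ¬ lt g g
  trans : ∀ f g h, lt f g → lt g h → lt f h
  total : ∀ f g, f ≠ g → lt f g ∨ lt g f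
  mul_left : ∀ f g h, lt f g → lt (h * f) (h * g)

/-- The topology on the space `LO(G)` of left orders of `G`, i.e. the topology induced
from the product (pointwise convergence) topology on `{±1}^{G∖{e}}` via the sign map
`λ(g) = 1 ⟺ g ∈ P_λ`.  A subbasis is given by the sets of left orders for which a fixed
element `g` is positive, resp. not positive. -/
instance LeftOrder.instTopologicalSpace (G : Type*) [Group G] :
    TopologicalSpace (LeftOrder G) :=
  TopologicalSpace.generateFrom
    {U : Set (LeftOrder G) | ∃ g : G,
      U = {mu : LeftOrder G | mu.lt 1 g} ∨ U = {mu : LeftOrder G | ¬ mu.lt 1 g}}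

/-- A left order is isolated if it is an isolated point of `LO(G)`. -/
def LeftOrder.IsIsolated {G : Type*} [Group G] (lam : LeftOrder G) : Prop :=
  IsOpen ({lam} : Set (LeftOrder G))

/-- The orbit of the base point `x₀` under an action of `G` on `ℝ`.
An orientation-preserving homeomorphism of `ℝ` is the same thing as a strictly
monotone (increasing) bijection `ℝ → ℝ`, so actions by orientation-preserving
homeomorphisms are encoded as homomorphisms `G →* Equiv.Perm ℝ` all of whose
values are strictly monotone. -/
def orbitSet {G : Type*} [Group G] (rho : G →* Equiv.Perm ℝ) (x₀ : ℝ) : Set ℝ :=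
  Set.range fun g : G => rho g x₀

/-- `rho` is tight at `x₀`: (1) the stabilizer of `x₀` is trivial, (2) the orbit of `x₀`
is unbounded below and above, and (3) whenever the closure of the orbit meets `[a,b]`
exactly in `{a,b}` (with `a < b`), both `a` and `b` belong to the orbit. -/
def IsTightAt {G : Type*} [Group G] (rho : G →* Equiv.Perm ℝ) (x₀ : ℝ) : Prop :=
  (∀ g : G, rho g x₀ = x₀ → g = 1) ∧
  ¬ BddBelow (orbitSet rho x₀) ∧ ¬ BddAbove (orbitSet rho x₀) ∧
  ∀ a b : ℝ, a < b → closure (orbitSet rho x₀) ∩ Set.Icc a b = {a, b} →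
    a ∈ orbitSet rho x₀ ∧ b ∈ orbitSet rho x₀

/-- `rho` realizes the left order `lam` at the base point `x₀`. -/
def RealizesAt {G : Type*} [Group G] (rho : G →* Equiv.Perm ℝ) (x₀ : ℝ)
    (lam : LeftOrder G) : Prop :=
  ∀ f g : G, lam.lt f g ↔ rho f x₀ < rho g x₀

/-!
Isolation of `λ` means that `λ` is determined by the signs of finitely many elements `S`.
If `ρ` were not cocompact, some orbit would avoid a window `[x₀, b]` containing all
`ρ(s^{±1}) x₀`, `s ∈ S`. Orbits are unbounded above (the supremum of a bounded orbit would
be a global fixed point), so the least point `y ≥ b` of that orbit's closure has an orbit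
avoiding `(x₀, y)`. This gap forces each `s ∈ S` to fix `y`, and makes `ρ(g) y - y`, when
nonzero, have the sign of `ρ(g) x₀ - x₀`. Ordering `G` by the reversed position of `ρ(g) y`,
with ties broken by `λ`, then gives a left order that agrees with `λ` on `S` but differs from
it at any element moving `y`, and such elements exist because `ρ` has no global fixed point.
-/

section PermAction

variable {G α : Type*} [Group G] [LinearOrder α] {rho : G →* Equiv.Perm α}

theorem apply_inv_lt_iff (hmono : ∀ g, StrictMono (rho g)) {g : G} {u v : α} :
    rho g⁻¹ u < v ↔ u < rho g v := by
  rw [← (hmono g).lt_iff_lt]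
  simp

theorem lt_apply_inv_iff (hmono : ∀ g, StrictMono (rho g)) {g : G} {u v : α} :
    u < rho g⁻¹ v ↔ rho g u < v := by
  rw [← (hmono g).lt_iff_lt]
  simp

def LeftOrder.reverseAt (lam : LeftOrder G) (rho : G →* Equiv.Perm α)
    (hmono : ∀ g, StrictMono (rho g)) (y : α) : LeftOrder G where
  lt f g := rho g y < rho f y ∨ (rho f y = rho g y ∧ lam.lt f g)
  irrefl g := by rintro (h | ⟨-, h⟩) <;> simp_all [lam.irrefl]
  trans f g h := by
    rintro (hfg | ⟨efg, lfg⟩) (hgh | ⟨egh, lgh⟩)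
    · exact .inl (hgh.trans hfg)
    · exact .inl (egh ▸ hfg)
    · exact .inl (efg ▸ hgh)
    · exact .inr ⟨efg.trans egh, lam.trans f g h lfg lgh⟩
  total f g hfg := by
    rcases lt_trichotomy (rho f y) (rho g y) with h | h | h
    · exact .inr (.inl h)
    · exact (lam.total f g hfg).imp (fun l => .inr ⟨h, l⟩) (fun l => .inr ⟨h.symm, l⟩)
    · exact .inl (.inl h)
  mul_left f g h := by
    simp only [map_mul, Equiv.Perm.mul_apply, (hmono h).lt_iff_lt, (rho h).injective.eq_iff]
    exact Or.imp_right (And.imp_right (lam.mul_left f g h))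

theorem LeftOrder.reverseAt_one_lt_iff (lam : LeftOrder G) (hmono : ∀ g, StrictMono (rho g))
    {y : α} {g : G} :
    (lam.reverseAt rho hmono y).lt 1 g ↔ rho g y < y ∨ (y = rho g y ∧ lam.lt 1 g) := by
  simp [LeftOrder.reverseAt]

end PermAction

theorem LeftOrder.IsIsolated.exists_finset_determining {G : Type*} [Group G] {lam : LeftOrder G}
    (h : lam.IsIsolated) :
    ∃ S : Finset G, ∀ mu : LeftOrder G, (∀ g ∈ S, mu.lt 1 g ↔ lam.lt 1 g) → mu = lam := by
  classical
  obtain ⟨_, ⟨F, ⟨hF, hFsub⟩, rfl⟩, hlamF, hFlam⟩ :=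
    (TopologicalSpace.isTopologicalBasis_of_subbasis rfl).mem_nhds_iff.1 (h.mem_nhds rfl)
  have hFsub : ∀ s ∈ F, ∃ g : G, s = {mu | mu.lt 1 g} ∨ s = {mu | ¬ mu.lt 1 g} := hFsub
  choose! elt helt using hFsub
  refine ⟨hF.toFinset.image elt, fun mu hmu => hFlam (Set.mem_sInter.2 fun s hs => ?_)⟩
  have hlam := Set.mem_sInter.1 hlamF s hs
  have hmu := hmu (elt s) (Finset.mem_image_of_mem _ (hF.mem_toFinset.2 hs))
  rcases helt s hs with hs | hs <;> rw [hs] at hlam ⊢ <;> simpa [hmu] using hlam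

section RealAction

variable {G : Type*} [Group G] {rho : G →* Equiv.Perm ℝ}

theorem continuous_of_strictMono_perm (hmono : ∀ g, StrictMono (rho g)) (g : G) :
    Continuous (rho g) :=
  (hmono g).monotone.continuous_of_surjective (rho g).surjective

theorem image_orbitSet (g : G) (z : ℝ) : rho g '' orbitSet rho z = orbitSet rho z := by
  have : rho g ∘ (fun h => rho h z) = (fun h => rho h z) ∘ Equiv.mulLeft g := by
    ext h
    simp
  rw [orbitSet, ← Set.range_comp, this, (Equiv.mulLeft g).surjective.range_comp]

theorem apply_mem_orbitSet {g : G} {z t : ℝ} (ht : t ∈ orbitSet rho z) :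
    rho g t ∈ orbitSet rho z :=
  image_orbitSet g z ▸ Set.mem_image_of_mem _ ht

theorem apply_mem_closure_orbitSet (hmono : ∀ g, StrictMono (rho g)) {g : G} {z t : ℝ}
    (ht : t ∈ closure (orbitSet rho z)) : rho g t ∈ closure (orbitSet rho z) :=
  map_mem_closure (continuous_of_strictMono_perm hmono g) ht fun _ => apply_mem_orbitSet

theorem orbitSet_subset_closure_orbitSet (hmono : ∀ g, StrictMono (rho g)) {z y : ℝ}
    (hy : y ∈ closure (orbitSet rho z)) : orbitSet rho y ⊆ closure (orbitSet rho z) := by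
  rintro _ ⟨g, rfl⟩
  exact apply_mem_closure_orbitSet hmono hy

theorem apply_sSup_orbitSet (hmono : ∀ g, StrictMono (rho g)) {z : ℝ}
    (hz : BddAbove (orbitSet rho z)) (g : G) :
    rho g (sSup (orbitSet rho z)) = sSup (orbitSet rho z) := by
  rw [(hmono g).monotone.map_csSup_of_continuousAt (A := orbitSet rho z)
    (continuous_of_strictMono_perm hmono g).continuousAt (Set.range_nonempty _) hz,
    image_orbitSet]

theorem exists_apply_ne (hmono : ∀ g, StrictMono (rho g)) {x₀ : ℝ}
    (hbb : ¬ BddBelow (orbitSet rho x₀)) (hba : ¬ BddAbove (orbitSet rho x₀)) (y : ℝ) :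
    ∃ g, rho g y ≠ y := by
  by_contra! hfix
  rcases le_total x₀ y with h | h
  · exact hba ⟨y, by rintro _ ⟨g, rfl⟩; simpa [hfix g] using (hmono g).monotone h⟩
  · exact hbb ⟨y, by rintro _ ⟨g, rfl⟩; simpa [hfix g] using (hmono g).monotone h⟩

theorem not_bddAbove_orbitSet (hmono : ∀ g, StrictMono (rho g)) {x₀ : ℝ}
    (hbb : ¬ BddBelow (orbitSet rho x₀)) (hba : ¬ BddAbove (orbitSet rho x₀)) (z : ℝ) :
    ¬ BddAbove (orbitSet rho z) := fun hz =>
  let ⟨g, hg⟩ := exists_apply_ne hmono hbb hba (sSup (orbitSet rho z))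
  hg (apply_sSup_orbitSet hmono hz g)

-- `y` is the least point `≥ b` of the closure of the orbit of `z`.
theorem exists_disjoint_orbitSet_Ioo (hmono : ∀ g, StrictMono (rho g)) {a b z : ℝ}
    (hz : Disjoint (orbitSet rho z) (Set.Ioo a b)) (hzA : ¬ BddAbove (orbitSet rho z)) :
    ∃ y, b ≤ y ∧ Disjoint (orbitSet rho y) (Set.Ioo a y) := by
  set C := closure (orbitSet rho z)
  have hC : Disjoint C (Set.Ioo a b) := hz.closure_left isOpen_Ioo
  have hY : IsClosed (C ∩ Set.Ici b) := isClosed_closure.inter isClosed_Ici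
  have hYne : (C ∩ Set.Ici b).Nonempty := by
    obtain ⟨_, ht, hbt⟩ := not_bddAbove_iff.1 hzA b
    exact ⟨_, subset_closure ht, hbt.le⟩
  have hYbdd : BddBelow (C ∩ Set.Ici b) := ⟨b, fun _ ht => ht.2⟩
  obtain ⟨hyC, hby⟩ := hY.csInf_mem hYne hYbdd
  refine ⟨_, hby, Set.disjoint_left.2 fun t ht hat => ?_⟩
  have htC := orbitSet_subset_closure_orbitSet hmono hyC ht
  rcases lt_or_ge t b with htb | hbt
  · exact Set.disjoint_left.1 hC htC ⟨hat.1, htb⟩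
  · exact (csInf_le hYbdd ⟨htC, hbt⟩).not_gt hat.2

section Gap

variable {x₀ y : ℝ}

theorem apply_le_self_of_apply_lt (hmono : ∀ g, StrictMono (rho g))
    (hgap : Disjoint (orbitSet rho y) (Set.Ioo x₀ y)) {g : G} (hg : rho g x₀ < y) :
    rho g y ≤ y := by
  by_contra! h
  refine Set.disjoint_left.1 hgap ⟨g⁻¹, rfl⟩ ⟨?_, ?_⟩
  · exact (lt_apply_inv_iff hmono).2 hg
  · exact (apply_inv_lt_iff hmono).2 h

theorem apply_eq_self_of_apply_lt (hmono : ∀ g, StrictMono (rho g))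
    (hgap : Disjoint (orbitSet rho y) (Set.Ioo x₀ y)) {g : G} (hg : rho g x₀ < y)
    (hg' : rho g⁻¹ x₀ < y) : rho g y = y := by
  refine (apply_le_self_of_apply_lt hmono hgap hg).antisymm ?_
  have := apply_le_self_of_apply_lt hmono hgap hg'
  exact not_lt.1 fun h => this.not_gt ((lt_apply_inv_iff hmono).2 h)

theorem apply_lt_self_of_apply_lt_self (hmono : ∀ g, StrictMono (rho g))
    (hgap : Disjoint (orbitSet rho y) (Set.Ioo x₀ y)) (hxy : x₀ < y) {g : G}
    (hg : rho g y < y) : rho g x₀ < x₀ := by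
  have : rho g y ≤ x₀ := not_lt.1 fun h => Set.disjoint_left.1 hgap ⟨g, rfl⟩ ⟨h, hg⟩
  exact ((hmono g) hxy).trans_le this

theorem lt_apply_self_of_lt_apply_self (hmono : ∀ g, StrictMono (rho g))
    (hgap : Disjoint (orbitSet rho y) (Set.Ioo x₀ y)) (hxy : x₀ < y) {g : G}
    (hg : y < rho g y) : x₀ < rho g x₀ :=
  (apply_inv_lt_iff hmono).1 <|
    apply_lt_self_of_apply_lt_self hmono hgap hxy ((apply_inv_lt_iff hmono).2 hg)

theorem LeftOrder.reverseAt_ne (hmono : ∀ g, StrictMono (rho g))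
    (hgap : Disjoint (orbitSet rho y) (Set.Ioo x₀ y)) (hxy : x₀ < y) {lam : LeftOrder G}
    (hreal : RealizesAt rho x₀ lam) {g : G} (hg : rho g y ≠ y) :
    lam.reverseAt rho hmono y ≠ lam := by
  intro h
  have hlam : lam.lt 1 g ↔ x₀ < rho g x₀ := by simpa using hreal 1 g
  have hrev := lam.reverseAt_one_lt_iff hmono (y := y) (g := g)
  rw [h, hlam] at hrev
  rcases hg.lt_or_gt with hlt | hgt
  · exact (apply_lt_self_of_apply_lt_self hmono hgap hxy hlt).not_gt (hrev.2 (.inl hlt))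
  · have := lt_apply_self_of_lt_apply_self hmono hgap hxy hgt
    rcases hrev.1 this with h' | ⟨h', -⟩
    · exact h'.not_gt hgt
    · exact hgt.ne h'

end Gap

end RealAction

theorem isolated_leftOrder_tight_realization_cocompact_general
    {G : Type*} [Group G] (lam : LeftOrder G)
    (hiso : lam.IsIsolated) (rho : G →* Equiv.Perm ℝ)
    (hmono : ∀ g : G, StrictMono ⇑(rho g)) (x₀ : ℝ)
    (htight : IsTightAt rho x₀) (hreal : RealizesAt rho x₀ lam) :
    ∃ a b : ℝ, a ≤ b ∧ ∀ x : ℝ, ∃ g : G, rho g x ∈ Set.Icc a b := by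
  obtain ⟨-, hbb, hba, -⟩ := htight
  obtain ⟨S, hS⟩ := hiso.exists_finset_determining
  obtain ⟨M, hM⟩ := (insert x₀ (S.image fun g => max (rho g x₀) (rho g⁻¹ x₀))).exists_le
  simp only [Finset.mem_insert, Finset.mem_image, forall_eq_or_imp, forall_exists_index,
    and_imp, forall_apply_eq_imp_iff₂, max_le_iff] at hM
  by_contra! hcpt
  obtain ⟨z, hz⟩ := hcpt x₀ (M + 1) (by linarith [hM.1])
  have hzgap : Disjoint (orbitSet rho z) (Set.Ioo x₀ (M + 1)) := by
    rw [Set.disjoint_left]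
    rintro _ ⟨g, rfl⟩ hg
    exact hz g (Set.Ioo_subset_Icc_self hg)
  obtain ⟨y, hMy, hgap⟩ := exists_disjoint_orbitSet_Ioo hmono hzgap
    (not_bddAbove_orbitSet hmono hbb hba z)
  have hxy : x₀ < y := by linarith [hM.1]
  have hSfix : ∀ g ∈ S, rho g y = y := fun g hg =>
    apply_eq_self_of_apply_lt hmono hgap (by linarith [(hM.2 g hg).1])
      (by linarith [(hM.2 g hg).2])
  obtain ⟨g₀, hg₀⟩ := exists_apply_ne hmono hbb hba y
  refine LeftOrder.reverseAt_ne hmono hgap hxy hreal hg₀ (hS _ fun g hg => ?_)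
  simp [LeftOrder.reverseAt_one_lt_iff, hSfix g hg]

/-- If `λ` is an isolated left order on a countable group `G`, then any
homomorphism `ρ : G → Homeo₊(ℝ)` which is tight at `x₀` and realizes `λ` at `x₀` is
cocompact: there is a compact interval `[a,b] ⊆ ℝ` meeting every `ρ(G)`-orbit. -/
theorem isolated_leftOrder_tight_realization_cocompact
    {G : Type*} [Group G] [Countable G] (lam : LeftOrder G)
    (hiso : lam.IsIsolated) (rho : G →* Equiv.Perm ℝ)
    (hmono : ∀ g : G, StrictMono ⇑(rho g)) (x₀ : ℝ)
    (htight : IsTightAt rho x₀) (hreal : RealizesAt rho x₀ lam) :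
    ∃ a b : ℝ, a ≤ b ∧ ∀ x : ℝ, ∃ g : G, rho g x ∈ Set.Icc a b :=
  isolated_leftOrder_tight_realization_cocompact_general lam hiso rho hmono x₀ htight hreal
end

section
/- Let G be a countable group and let λ be an isolated left order on G. Then the set of λ-convex subgroups of G is finite. -/
/-- A subgroup `H` is `λ`-convex if `h₁ <_λ g <_λ h₂` with `h₁, h₂ ∈ H` implies `g ∈ H`. -/
def LeftOrder.IsConvex {G : Type*} [Group G] (lam : LeftOrder G) (H : Subgroup G) : Prop :=
  ∀ h₁ h₂ g : G, h₁ ∈ H → h₂ ∈ H → lam.lt h₁ g → lam.lt g h₂ → g ∈ H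


namespace LeftOrder

variable {G : Type*} [Group G] (lam : LeftOrder G)

lemma asymm {a b : G} (h : lam.lt a b) : ¬ lam.lt b a :=
  fun h' => lam.irrefl a (lam.trans a b a h h')

lemma lt_iff_one {g h : G} : lam.lt g h ↔ lam.lt 1 (g⁻¹ * h) := by
  constructor
  · intro hl
    have := lam.mul_left g h g⁻¹ hl
    simpa using this
  · intro hl
    have := lam.mul_left 1 (g⁻¹ * h) g hl
    simpa using this

lemma lt_one_iff {g h : G} : lam.lt g h ↔ lam.lt (h⁻¹ * g) 1 := by
  constructor
  · intro hl
    have := lam.mul_left g h h⁻¹ hl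
    simpa using this
  · intro hl
    have := lam.mul_left (h⁻¹ * g) 1 h hl
    simpa using this

/-- The positive-cone predicate of the order flipped on a convex subgroup `C`. -/
def flipP (C : Subgroup G) (x : G) : Prop :=
  (x ∈ C → lam.lt x 1) ∧ (x ∉ C → lam.lt 1 x)

lemma flipP_mul {C : Subgroup G} (hC : lam.IsConvex C) {a b : G}
    (ha : lam.flipP C a) (hb : lam.flipP C b) : lam.flipP C (a * b) := by
  by_cases hac : a ∈ C <;> by_cases hbc : b ∈ C
  · have ha' := ha.1 hac
    have hb' := hb.1 hbc
    have habC : a * b ∈ C := mul_mem hac hbc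
    refine ⟨fun _ => ?_, fun h => absurd habC h⟩
    have h1 : lam.lt (a * b) (a * 1) := lam.mul_left b 1 a hb'
    rw [mul_one] at h1
    exact lam.trans _ _ _ h1 ha'
  · -- a ∈ C, b ∉ C
    have ha' := ha.1 hac
    have hb' := hb.2 hbc
    have habC : a * b ∉ C := fun h => hbc (by simpa using mul_mem (inv_mem hac) h)
    refine ⟨fun h => absurd h habC, fun _ => ?_⟩
    have hne : a * b ≠ 1 := fun h => hbc (by
      rw [eq_inv_of_mul_eq_one_right h]; exact inv_mem hac)
    rcases lam.total 1 (a * b) (fun h => hne h.symm) with h | h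
    · exact h
    · exfalso
      have h2 : lam.lt (a⁻¹ * (a * b)) (a⁻¹ * 1) := lam.mul_left (a * b) 1 a⁻¹ h
      rw [inv_mul_cancel_left, mul_one] at h2
      exact hbc (hC 1 a⁻¹ b (one_mem C) (inv_mem hac) hb' h2)
  · -- a ∉ C, b ∈ C
    have ha' := ha.2 hac
    have hb' := hb.1 hbc
    have habC : a * b ∉ C := fun h => hac (by simpa using mul_mem h (inv_mem hbc))
    refine ⟨fun h => absurd h habC, fun _ => ?_⟩
    have hne : a * b ≠ 1 := fun h => hac (by
      rw [eq_inv_of_mul_eq_one_left h]; exact inv_mem hbc)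
    rcases lam.total 1 (a * b) (fun h => hne h.symm) with h | h
    · exact h
    · exfalso
      have h2 : lam.lt (b⁻¹ * a⁻¹ * (a * b)) (b⁻¹ * a⁻¹ * 1) := lam.mul_left (a * b) 1 _ h
      have e1 : b⁻¹ * a⁻¹ * (a * b) = 1 := by group
      rw [e1, mul_one] at h2
      have h3 : lam.lt (b * 1) (b * (b⁻¹ * a⁻¹)) := lam.mul_left 1 (b⁻¹ * a⁻¹) b h2
      rw [mul_one, mul_inv_cancel_left] at h3
      have h4 : lam.lt (a⁻¹ * 1) (a⁻¹ * a) := lam.mul_left 1 a a⁻¹ ha'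
      rw [mul_one, inv_mul_cancel] at h4
      exact hac (inv_mem_iff.mp (hC b 1 a⁻¹ hbc (one_mem C) h3 h4))
  · -- a ∉ C, b ∉ C
    have ha' := ha.2 hac
    have hb' := hb.2 hbc
    have h1 : lam.lt (a * 1) (a * b) := lam.mul_left 1 b a hb'
    rw [mul_one] at h1
    have hab : lam.lt 1 (a * b) := lam.trans _ _ _ ha' h1
    have habC : a * b ∉ C := fun h => hac (hC 1 (a * b) a (one_mem C) h ha' h1)
    exact ⟨fun h => absurd h habC, fun _ => hab⟩

/-- The left order obtained from `lam` by reversing it on a convex subgroup `C`. -/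
def flip (C : Subgroup G) (hC : lam.IsConvex C) : LeftOrder G where
  lt g h := lam.flipP C (g⁻¹ * h)
  irrefl g := by
    intro h
    exact lam.irrefl 1 (by simpa using h.1 (by simp [one_mem]))
  trans f g h h1 h2 := by
    have := lam.flipP_mul hC h1 h2
    simpa [mul_assoc] using this
  total f g hne := by
    have h1 : f⁻¹ * g ≠ 1 := fun h => hne (by rwa [inv_mul_eq_one] at h)
    by_cases hc : f⁻¹ * g ∈ C
    · have hc' : g⁻¹ * f ∈ C := by simpa using inv_mem hc
      rcases lam.total (f⁻¹ * g) 1 h1 with h | h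
      · exact Or.inl ⟨fun _ => h, fun hx => absurd hc hx⟩
      · right
        refine ⟨fun _ => ?_, fun hx => absurd hc' hx⟩
        have := lam.mul_left 1 (f⁻¹ * g) (g⁻¹ * f) h
        simpa [mul_assoc] using this
    · have hc' : g⁻¹ * f ∉ C := fun h => hc (by simpa using inv_mem h)
      rcases lam.total 1 (f⁻¹ * g) (fun h => h1 h.symm) with h | h
      · exact Or.inl ⟨fun hx => absurd hx hc, fun _ => h⟩
      · right
        refine ⟨fun hx => absurd hx hc', fun _ => ?_⟩
        have := lam.mul_left (f⁻¹ * g) 1 (g⁻¹ * f) h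
        simpa [mul_assoc] using this
  mul_left f g h hl := by
    simpa [mul_assoc] using hl

lemma flip_lt_one_right {C : Subgroup G} (hC : lam.IsConvex C) (t : G) :
    (lam.flip C hC).lt 1 t ↔ ((t ∈ C → lam.lt t 1) ∧ (t ∉ C → lam.lt 1 t)) := by
  show lam.flipP C (1⁻¹ * t) ↔ _
  rw [inv_one, one_mul]
  rfl

/-- A convex subgroup of `lam` contained in `C` stays convex for the flipped order. -/
lemma flip_isConvex {C D : Subgroup G} (hC : lam.IsConvex C) (hD : lam.IsConvex D)
    (hDC : D ≤ C) : (lam.flip C hC).IsConvex D := by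
  intro h1 h2 g hh1 hh2 hl1 hl2
  have hl1' : lam.flipP C (h1⁻¹ * g) := hl1
  have hl2' : lam.flipP C (g⁻¹ * h2) := hl2
  by_cases hg : g ∈ C
  · have m1 : h1⁻¹ * g ∈ C := mul_mem (inv_mem (hDC hh1)) hg
    have m2 : g⁻¹ * h2 ∈ C := mul_mem (inv_mem hg) (hDC hh2)
    have a1 : lam.lt (h1⁻¹ * g) 1 := hl1'.1 m1
    have a2 : lam.lt (g⁻¹ * h2) 1 := hl2'.1 m2
    -- a1 : g <_λ h1 ; a2 : h2 <_λ g
    have b1 : lam.lt g h1 := by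
      have := lam.mul_left (h1⁻¹ * g) 1 h1 a1
      simpa using lam.lt_one_iff.mpr (by simpa using a1)
    have b2 : lam.lt h2 g := by
      have := lam.lt_one_iff (g := h2) (h := g)
      rw [this]
      simpa using a2
    exact hD h2 h1 g hh2 hh1 b2 b1
  · have m1 : h1⁻¹ * g ∉ C := fun h => hg (by simpa using mul_mem (hDC hh1) h)
    have m2 : g⁻¹ * h2 ∉ C := fun h => hg (by
      have := mul_mem h (inv_mem (hDC hh2))
      simpa [mul_assoc] using inv_mem_iff.mp (by simpa using inv_mem this))
    have a1 : lam.lt 1 (h1⁻¹ * g) := hl1'.2 m1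
    have a2 : lam.lt 1 (g⁻¹ * h2) := hl2'.2 m2
    exact hD h1 h2 g hh1 hh2 (lam.lt_iff_one.mpr a1) (lam.lt_iff_one.mpr a2)

end LeftOrder

namespace LeftOrder

variable {G : Type*} [Group G] (lam : LeftOrder G)

lemma flip_lt_def {C : Subgroup G} (hC : lam.IsConvex C) (g h : G) :
    (lam.flip C hC).lt g h ↔ lam.flipP C (g⁻¹ * h) := Iff.rfl

lemma lt_one_inv {t : G} : lam.lt 1 t ↔ lam.lt t⁻¹ 1 := by
  rw [lam.lt_one_iff (g := 1) (h := t), mul_one]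

/-- Agreement of the double flip with `lam` outside `C \ D`. -/
lemma flip2_agree {C D : Subgroup G} (hC : lam.IsConvex C)
    (hD' : (lam.flip C hC).IsConvex D) (hDC : D ≤ C) {t : G} (ht : t ∈ D ∨ t ∉ C) :
    ((lam.flip C hC).flip D hD').lt 1 t ↔ lam.lt 1 t := by
  rw [(lam.flip C hC).flip_lt_def hD', inv_one, one_mul]
  rcases ht with htD | htC
  · have htC : t ∈ C := hDC htD
    constructor
    · intro hx
      have h1 : (lam.flip C hC).lt t 1 := hx.1 htD
      have h2 : lam.flipP C t⁻¹ := by simpa [flip_lt_def] using h1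
      have := h2.1 (inv_mem htC)
      exact (lam.lt_one_inv).mpr this
    · intro hx
      refine ⟨fun _ => ?_, fun h => absurd htD h⟩
      show lam.flipP C (t⁻¹ * 1)
      rw [mul_one]
      exact ⟨fun _ => (lam.lt_one_inv).mp hx, fun h => absurd (inv_mem htC) h⟩
  · have htD : t ∉ D := fun h => htC (hDC h)
    constructor
    · intro hx
      have h1 : (lam.flip C hC).lt 1 t := hx.2 htD
      have h2 : lam.flipP C t := by simpa [flip_lt_def] using h1
      exact h2.2 htC
    · intro hx
      refine ⟨fun h => absurd h htD, fun _ => ?_⟩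
      show lam.flipP C (1⁻¹ * t)
      rw [inv_one, one_mul]
      exact ⟨fun h => absurd h htC, fun _ => hx⟩

/-- On `C \ D` the double flip reverses `lam`. -/
lemma flip2_reverse {C D : Subgroup G} (hC : lam.IsConvex C)
    (hD' : (lam.flip C hC).IsConvex D) {t : G} (htC : t ∈ C) (htD : t ∉ D) :
    ((lam.flip C hC).flip D hD').lt 1 t ↔ lam.lt t 1 := by
  rw [(lam.flip C hC).flip_lt_def hD', inv_one, one_mul]
  constructor
  · intro hx
    have h1 : (lam.flip C hC).lt 1 t := hx.2 htD
    have h2 : lam.flipP C t := by simpa [flip_lt_def] using h1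
    exact h2.1 htC
  · intro hx
    refine ⟨fun h => absurd h htD, fun _ => ?_⟩
    show lam.flipP C (1⁻¹ * t)
    rw [inv_one, one_mul]
    exact ⟨fun _ => hx, fun h => absurd htC h⟩

/-- Any two `lam`-convex subgroups are comparable. -/
lemma isConvex_comparable {H K : Subgroup G} (hH : lam.IsConvex H) (hK : lam.IsConvex K) :
    H ≤ K ∨ K ≤ H := by
  by_contra hcon
  push_neg at hcon
  obtain ⟨h, hhH, hhK⟩ := SetLike.not_le_iff_exists.mp hcon.1
  obtain ⟨k, hkK, hkH⟩ := SetLike.not_le_iff_exists.mp hcon.2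
  -- replace h, k by positive representatives
  have hpos : ∀ x : G, x ≠ 1 → ∃ y, (y = x ∨ y = x⁻¹) ∧ lam.lt 1 y := by
    intro x hx
    rcases lam.total 1 x (fun e => hx e.symm) with hl | hl
    · exact ⟨x, Or.inl rfl, hl⟩
    · refine ⟨x⁻¹, Or.inr rfl, ?_⟩
      have := lam.mul_left x 1 x⁻¹ hl
      simpa using this
  obtain ⟨h', hh', hh'pos⟩ := hpos h (fun e => hhK (e ▸ one_mem K))
  obtain ⟨k', hk', hk'pos⟩ := hpos k (fun e => hkH (e ▸ one_mem H))
  have hh'H : h' ∈ H := by rcases hh' with rfl | rfl; exact hhH; exact inv_mem hhH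
  have hh'K : h' ∉ K := by
    rcases hh' with rfl | rfl; exact hhK; exact fun e => hhK (by simpa using inv_mem e)
  have hk'K : k' ∈ K := by rcases hk' with rfl | rfl; exact hkK; exact inv_mem hkK
  have hk'H : k' ∉ H := by
    rcases hk' with rfl | rfl; exact hkH; exact fun e => hkH (by simpa using inv_mem e)
  have hne : h' ≠ k' := fun e => hh'K (e ▸ hk'K)
  rcases lam.total h' k' hne with hl | hl
  · exact hh'K (hK 1 k' h' (one_mem K) hk'K hh'pos hl)
  · exact hk'H (hH 1 h' k' (one_mem H) hh'H hk'pos hl)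

end LeftOrder


/-- If `λ` is an isolated left order on a countable group `G`, then the
set of `λ`-convex subgroups of `G` is finite. -/
theorem isolated_leftOrder_finitely_many_convex_subgroups
    {G : Type*} [Group G] [Countable G] (lam : LeftOrder G) (hiso : lam.IsIsolated) :
    {H : Subgroup G | lam.IsConvex H}.Finite := by
  classical
  -- Extract a finite test set `T ⊆ G` from isolation.
  set S : Set (Set (LeftOrder G)) :=
    {U : Set (LeftOrder G) | ∃ g : G,
      U = {mu : LeftOrder G | mu.lt 1 g} ∨ U = {mu : LeftOrder G | ¬ mu.lt 1 g}} with hS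
  have hbasis := TopologicalSpace.isTopologicalBasis_of_subbasis (s := S)
    (t := LeftOrder.instTopologicalSpace G) rfl
  obtain ⟨v, ⟨F, ⟨hFfin, hFS⟩, rfl⟩, hlamv, hsub⟩ :=
    hbasis.exists_subset_of_mem_open (Set.mem_singleton lam) hiso
  set f : Set (LeftOrder G) → G := fun U =>
    if h : ∃ g : G, U = {mu : LeftOrder G | mu.lt 1 g} ∨ U = {mu : LeftOrder G | ¬ mu.lt 1 g}
    then h.choose else 1 with hf
  have hfspec : ∀ U ∈ F, U = {mu : LeftOrder G | mu.lt 1 (f U)} ∨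
      U = {mu : LeftOrder G | ¬ mu.lt 1 (f U)} := by
    intro U hU
    have h := hFS hU
    have h' : ∃ g : G, U = {mu : LeftOrder G | mu.lt 1 g} ∨
        U = {mu : LeftOrder G | ¬ mu.lt 1 g} := h
    simp only [hf]
    rw [dif_pos h']
    exact h'.choose_spec
  set T : Set G := f '' F with hT
  have hTfin : T.Finite := hFfin.image f
  -- Key: any left order agreeing with `lam` on `T` equals `lam`.
  have key : ∀ mu : LeftOrder G, (∀ t ∈ T, (mu.lt 1 t ↔ lam.lt 1 t)) → mu = lam := by
    intro mu hmu
    have hmem : mu ∈ ⋂₀ F := by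
      intro U hU
      have hlamU : lam ∈ U := hlamv U hU
      have hT : f U ∈ T := Set.mem_image_of_mem f hU
      rcases hfspec U hU with h | h
      · rw [h] at hlamU ⊢
        exact (hmu _ hT).mpr hlamU
      · rw [h] at hlamU ⊢
        exact fun hx => hlamU ((hmu _ hT).mp hx)
    exact hsub hmem
  -- The map `H ↦ T ∩ H` is injective on convex subgroups.
  apply Set.Finite.of_finite_image (f := fun H : Subgroup G => T ∩ (H : Set G))
  · apply Set.Finite.subset (hTfin.finite_subsets)
    rintro A ⟨H, _, rfl⟩
    exact Set.inter_subset_left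
  · -- injectivity
    have main : ∀ H K : Subgroup G, lam.IsConvex H → lam.IsConvex K → H ≤ K →
        T ∩ (H : Set G) = T ∩ (K : Set G) → K ≤ H := by
      intro H K hH hK hHK htrace
      by_contra hcon
      obtain ⟨t, htK, htH⟩ := SetLike.not_le_iff_exists.mp hcon
      have hH' : (lam.flip K hK).IsConvex H := lam.flip_isConvex hK hH hHK
      set nu : LeftOrder G := (lam.flip K hK).flip H hH' with hnu
      have hagree : ∀ s ∈ T, (nu.lt 1 s ↔ lam.lt 1 s) := by
        intro s hs
        apply lam.flip2_agree hK hH' hHK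
        by_cases hsK : s ∈ K
        · left
          have : s ∈ T ∩ (H : Set G) := htrace ▸ ⟨hs, hsK⟩
          exact this.2
        · right; exact hsK
      have hequal : nu = lam := key nu hagree
      -- but nu reverses lam at t
      have hrev : nu.lt 1 t ↔ lam.lt t 1 := lam.flip2_reverse hK hH' htK htH
      have hne : t ≠ 1 := fun e => htH (e ▸ one_mem H)
      rw [hequal] at hrev
      rcases lam.total 1 t (fun e => hne e.symm) with hl | hl
      · exact lam.asymm hl (hrev.mp hl)
      · exact lam.asymm hl (hrev.mpr hl)
    intro H hHc K hKc htr
    rcases lam.isConvex_comparable hHc hKc with hle | hle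
    · exact le_antisymm hle (main H K hHc hKc hle htr)
    · exact le_antisymm (main K H hKc hHc hle htr.symm) hle
end

section
/- Let G be a countable group and let λ be an isolated left order on G such that the only λ-convex subgroups of G are the trivial subgroup and G itself. Then there is an injective group homomorphism φ : G → (ℚ,+) which is either order-preserving (g <_λ g' ⟺ φ(g) < φ(g')) or order-reversing (g <_λ g' ⟺ φ(g') < φ(g)). In particular G is isomorphic to a subgroup of (ℚ,+) and λ is either the order induced by such an embedding into ℚ ⊂ ℝ or its reciprocal. -/
open Set Filter Topology
open scoped commutatorElement

theorem Module.exists_dual_apply_eq_zero_apply_eq_one {K V : Type*} [Field K] [AddCommGroup V]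
    [Module K V] {x y : V} (hx : x ∉ K ∙ y) : ∃ f : Module.Dual K V, f y = 0 ∧ f x = 1 := by
  obtain ⟨f, hfx, hfy⟩ := Submodule.exists_dual_map_eq_bot_of_notMem hx inferInstance
  have hfy0 : f y = 0 := (Submodule.mem_bot K).1
    (hfy ▸ Submodule.mem_map_of_mem (Submodule.mem_span_singleton_self y))
  exact ⟨(f x)⁻¹ • f, by simp [hfy0], inv_mul_cancel₀ hfx⟩

theorem Finset.exists_pos_forall_pos_add_mul {ι : Type*} (s : Finset ι) {p q : ι → ℝ}
    (hp : ∀ i ∈ s, 0 < p i) : ∃ ε > 0, ∀ i ∈ s, 0 < p i + ε * q i := by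
  have : ∀ᶠ ε in 𝓝[>] (0 : ℝ), ∀ i ∈ s, 0 < p i + ε * q i := by
    refine s.eventually_all.2 fun i hi ↦ nhdsWithin_le_nhds ?_
    have : Tendsto (fun ε : ℝ ↦ p i + ε * q i) (𝓝 0) (𝓝 (p i)) := by
      simpa using ((continuous_mul_const (q i)).const_add (p i)).tendsto (0 : ℝ)
    exact this.eventually (lt_mem_nhds (hp i hi))
  obtain ⟨ε, h, hε⟩ := (this.and self_mem_nhdsWithin).exists
  exact ⟨ε, hε, h⟩

theorem Irrational.exists_int_mul_add_mem_Ioo {α β : ℝ} (h : Irrational (β / α)) (hα : 0 < α)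
    {n : ℤ} (hn : n ≠ 0) : ∃ m : ℤ, m * α + n * β ∈ Ioo 0 α := by
  have hnβ : Irrational (n * β / α) := by simpa [mul_div_assoc] using h.intCast_mul hn
  refine ⟨-⌊n * β / α⌋, ?_⟩
  have : (-⌊n * β / α⌋ : ℤ) * α + n * β = α * Int.fract (n * β / α) := by
    rw [Int.fract]; push_cast; field_simp; ring
  rw [this]
  exact ⟨mul_pos hα (Int.fract_pos.2 (hnβ.ne_int _)),
    mul_lt_of_lt_one_right hα (Int.fract_lt_one _)⟩

theorem AddMonoidHom.exists_pos_add_mul_neg {A : Type*} [AddGroup A] {ψ χ : A →+ ℝ} {a b : A}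
    (ha : 0 < ψ a) (hirr : Irrational (ψ b / ψ a)) (hχa : χ a = 0) (hχb : χ b = 1) {ε : ℝ}
    (hε : 0 < ε) : ∃ g : A, 0 < ψ g ∧ ψ g + ε * χ g < 0 := by
  obtain ⟨n, hn⟩ := exists_nat_gt (ψ a / ε)
  have hn0 : (n : ℤ) ≠ 0 := by
    have : (0 : ℝ) < n := (div_pos ha hε).trans hn
    exact_mod_cast this.ne'
  obtain ⟨m, hm0, hma⟩ := hirr.exists_int_mul_add_mem_Ioo ha (neg_ne_zero.2 hn0)
  refine ⟨m • a + (-n : ℤ) • b, ?_, ?_⟩ <;> simp only [map_add, map_zsmul, hχa, hχb, zsmul_eq_mul]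
  · exact hm0
  · have := (div_lt_iff₀ hε).1 hn
    push_cast at hma ⊢
    linarith

section LeftOrdered

variable {G : Type*} [Group G] [LinearOrder G]

variable (G) in
def strictMonoMulRightSubgroup : Subgroup G where
  carrier := {x | StrictMono (· * x)}
  one_mem' _ _ h := by simpa using h
  mul_mem' {x y} hx hy := by simpa [Function.comp_def, mul_assoc] using hy.comp hx
  inv_mem' {x} hx u v huv := by
    rw [← hx.lt_iff_lt]
    simpa using huv

theorem exists_strictMono_rat_of_forall_eq_rat_mul {ψ : Additive G →+ ℝ} (hψ : StrictMono ψ)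
    {α : ℝ} (hα : 0 < α) (hrat : ∀ g : G, ∃ q : ℚ, ψ (.ofMul g) = q * α) :
    ∃ φ : G → ℚ, (∀ g g' : G, φ (g * g') = φ g + φ g') ∧ StrictMono φ := by
  choose φ hφ using hrat
  refine ⟨φ, fun g g' ↦ ?_, fun g g' hgg' ↦ ?_⟩
  · have : (φ (g * g') : ℝ) * α = (φ g + φ g') * α := by
      rw [← hφ, add_mul, ← hφ, ← hφ, ofMul_mul, map_add]
    exact_mod_cast mul_right_cancel₀ hα.ne' this
  · have : (φ g : ℝ) * α < φ g' * α := by rw [← hφ, ← hφ]; exact hψ hgg'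
    exact_mod_cast lt_of_mul_lt_mul_right this hα.le

variable [MulLeftMono G]

theorem zpow_right_strictMono' {a : G} (ha : 1 < a) : StrictMono fun n : ℤ ↦ a ^ n :=
  strictMono_int_of_lt_succ fun n ↦ by
    rw [zpow_add_one]
    exact lt_mul_of_one_lt_right' _ ha

theorem exists_one_lt_of_nontrivial [Nontrivial G] : ∃ a : G, 1 < a := by
  obtain ⟨y, hy⟩ := exists_ne (1 : G)
  rcases hy.lt_or_gt with h | h
  exacts [⟨y⁻¹, Left.one_lt_inv_iff.2 h⟩, ⟨y, h⟩]

theorem mul_mem_uIcc_mul_left_iff (x : G) {a b z : G} :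
    x * z ∈ uIcc (x * a) (x * b) ↔ z ∈ uIcc a b := by
  simp only [mem_uIcc, mul_le_mul_iff_left]

/-- The largest convex subgroup contained in `S`. -/
def Subgroup.convexCore (S : Subgroup G) : Subgroup G where
  carrier := {x | uIcc 1 x ⊆ S}
  one_mem' := by simp
  mul_mem' {x y} hx hy z hz := by
    rcases uIcc_subset_uIcc_union_uIcc (b := x) hz with hz | hz
    · exact hx hz
    · have : x⁻¹ * z ∈ uIcc 1 y := by
        simpa using (mul_mem_uIcc_mul_left_iff x⁻¹).2 hz
      simpa using S.mul_mem (hx right_mem_uIcc) (hy this)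
  inv_mem' {x} hx z hz := by
    have : x * z ∈ uIcc 1 x := by
      rw [uIcc_comm]
      simpa using (mul_mem_uIcc_mul_left_iff x).2 hz
    simpa using S.mul_mem (S.inv_mem (hx right_mem_uIcc)) (hx this)

theorem Subgroup.convexCore_le (S : Subgroup G) : S.convexCore ≤ S :=
  fun _ hx ↦ hx right_mem_uIcc

theorem Subgroup.ordConnected_convexCore (S : Subgroup G) :
    (S.convexCore : Set G).OrdConnected := by
  refine ⟨fun x hx y hy g hg z hz ↦ ?_⟩
  rcases uIcc_subset_uIcc_union_uIcc (b := 1) (Icc_subset_uIcc hg) with hg | hg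
  · exact hx (uIcc_subset_uIcc left_mem_uIcc (uIcc_comm x 1 ▸ hg) hz)
  · exact hy (uIcc_subset_uIcc left_mem_uIcc hg hz)

theorem Subgroup.eq_top_of_Icc_subset
    (hconv : ∀ H : Subgroup G, (H : Set G).OrdConnected → H = ⊥ ∨ H = ⊤)
    {S : Subgroup G} {m : G} (hm : 1 < m) (hS : Icc 1 m ⊆ S) : S = ⊤ := by
  have hmem : m ∈ S.convexCore := by
    change uIcc 1 m ⊆ S
    rwa [uIcc_of_le hm.le]
  rcases hconv _ S.ordConnected_convexCore with h | h
  · exact absurd ((Subgroup.mem_bot).1 (h ▸ hmem)) hm.ne'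
  · exact top_le_iff.1 (h ▸ S.convexCore_le)

theorem mulRightStrictMono_of_forall_lt_mul
    (hconv : ∀ H : Subgroup G, (H : Set G).OrdConnected → H = ⊥ ∨ H = ⊤)
    {a : G} (ha : 1 < a) {F : Finset G} (hF : ∀ f ∈ F, 1 < f)
    (hmono : ∀ x : G, (∀ f ∈ F, x < f * x) → StrictMono (· * x)) : MulRightStrictMono G := by
  set m := (insert a F).min' (Finset.insert_nonempty a F)
  have hm : 1 < m := (Finset.lt_min'_iff _ _).2 (by simpa [ha] using hF)
  have hS : Icc 1 m ⊆ strictMonoMulRightSubgroup G := by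
    rintro z ⟨h1z, hzm⟩
    refine hmono z fun f hf ↦ ?_
    rcases h1z.eq_or_lt with rfl | h1z
    · simpa using hF f hf
    · exact hzm.trans_lt <| ((insert a F).min'_le f (Finset.mem_insert_of_mem hf)).trans_lt
        (lt_mul_of_one_lt_right' f h1z)
  have htop := Subgroup.eq_top_of_Icc_subset hconv hm hS
  refine ⟨fun x _ _ huv ↦ ?_⟩
  have hx : x ∈ strictMonoMulRightSubgroup G := htop ▸ Subgroup.mem_top x
  exact hx huv

theorem exists_addMonoidHom_real_strictMono (hcomm : ∀ a b : G, a * b = b * a)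
    (harch : ∀ a : G, 1 < a → ∀ g, ∃ n : ℕ, g < a ^ n) :
    ∃ ψ : Additive G →+ ℝ, StrictMono ψ := by
  let _ : CommGroup G := { ‹Group G› with mul_comm := hcomm }
  have : IsOrderedMonoid G :=
    { mul_le_mul_left _ _ h c := by simpa only [hcomm _ c] using mul_le_mul_right h c }
  have : MulArchimedean G := ⟨fun g a ha ↦ (harch a ha g).imp fun _ h ↦ h.le⟩
  obtain ⟨f, hf⟩ := Archimedean.exists_orderAddMonoidHom_real_injective (Additive G)
  exact ⟨f, f.monotone'.strictMono_of_injective hf⟩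

end LeftOrdered

section BiOrdered

variable {G : Type*} [Group G] [LinearOrder G] [MulLeftMono G] [MulRightMono G]

def Subgroup.boundedByPowers (a : G) : Subgroup G where
  carrier := {x | ∃ n : ℕ, x ≤ a ^ n ∧ x⁻¹ ≤ a ^ n}
  one_mem' := ⟨0, by simp⟩
  mul_mem' := by
    rintro x y ⟨n, hxn, hxn'⟩ ⟨m, hym, hym'⟩
    refine ⟨n + m, ?_, ?_⟩
    · rw [pow_add]
      exact mul_le_mul' hxn hym
    · rw [mul_inv_rev, add_comm, pow_add]
      exact mul_le_mul' hym' hxn'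
  inv_mem' := by
    rintro x ⟨n, hxn, hxn'⟩
    exact ⟨n, hxn', by rwa [inv_inv]⟩

theorem Subgroup.ordConnected_boundedByPowers {a : G} (ha : 1 ≤ a) :
    (Subgroup.boundedByPowers a : Set G).OrdConnected := by
  refine ⟨fun x ⟨n, _, hxn⟩ y ⟨m, hym, _⟩ g ⟨hxg, hgy⟩ ↦ ⟨n + m, ?_, ?_⟩⟩
  · exact hgy.trans (hym.trans (pow_le_pow_right' ha (Nat.le_add_left m n)))
  · exact (inv_le_inv_iff.2 hxg).trans (hxn.trans (pow_le_pow_right' ha (Nat.le_add_right n m)))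

theorem exists_lt_pow_of_forall_ordConnected
    (hconv : ∀ H : Subgroup G, (H : Set G).OrdConnected → H = ⊥ ∨ H = ⊤)
    {a : G} (ha : 1 < a) (g : G) : ∃ n : ℕ, g < a ^ n := by
  have ha_mem : a ∈ Subgroup.boundedByPowers a :=
    ⟨1, by simp, by simpa using (Left.inv_lt_one_iff.2 ha).le.trans ha.le⟩
  rcases hconv _ (Subgroup.ordConnected_boundedByPowers ha.le) with h | h
  · exact absurd ((Subgroup.mem_bot).1 (h ▸ ha_mem)) ha.ne'
  · obtain ⟨n, hgn, -⟩ : g ∈ Subgroup.boundedByPowers a := h ▸ Subgroup.mem_top g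
    exact ⟨n + 1, hgn.trans_lt (pow_lt_pow_right' ha n.lt_succ_self)⟩

variable (harch : ∀ a : G, 1 < a → ∀ g, ∃ n : ℕ, g < a ^ n)
include harch

theorem exists_zpow_le_lt {a : G} (ha : 1 < a) (g : G) :
    ∃ k : ℤ, a ^ k ≤ g ∧ g < a ^ (k + 1) := by
  obtain ⟨n, hn⟩ := harch a ha g
  obtain ⟨m, hm⟩ := harch a ha g⁻¹
  obtain ⟨k, hk, hmax⟩ := Int.exists_greatest_of_bdd (P := fun k : ℤ ↦ a ^ k ≤ g)
    ⟨n, fun k hk ↦ ((zpow_right_strictMono' ha).lt_iff_lt.1 (by simpa using hk.trans_lt hn)).le⟩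
    ⟨-m, by simpa using (inv_lt_of_inv_lt' hm).le⟩
  exact ⟨k, hk, lt_of_not_ge fun h ↦ (hmax _ h).not_gt (lt_add_one k)⟩

theorem exists_eq_zpow_of_isLeast {z : G} (hz : IsLeast {x | 1 < x} z) (g : G) :
    ∃ k : ℤ, g = z ^ k := by
  obtain ⟨k, hk, hk'⟩ := exists_zpow_le_lt harch hz.1 g
  have h₁ : 1 ≤ (z ^ k)⁻¹ * g := le_inv_mul_iff_mul_le.2 (by simpa using hk)
  have h₂ : (z ^ k)⁻¹ * g < z := inv_mul_lt_iff_lt_mul.2 (by rwa [← zpow_add_one])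
  have h₃ : (z ^ k)⁻¹ * g = 1 := h₁.eq_or_lt.elim Eq.symm fun h ↦ absurd (hz.2 h) h₂.not_ge
  exact ⟨k, (inv_mul_eq_one.1 h₃).symm⟩

theorem commutatorElement_lt_mul_self {x : G} (hx : 1 < x) (g h : G) : ⁅g, h⁆ < x * x := by
  obtain ⟨p, hp, hp'⟩ := exists_zpow_le_lt harch hx g
  obtain ⟨q, hq, hq'⟩ := exists_zpow_le_lt harch hx h
  calc ⁅g, h⁆ = g * h * g⁻¹ * h⁻¹ := commutatorElement_def g h
    _ < x ^ (p + 1) * x ^ (q + 1) * x ^ (-p) * x ^ (-q) := by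
      rw [zpow_neg, zpow_neg]
      exact mul_lt_mul_of_lt_of_le (mul_lt_mul_of_lt_of_le (mul_lt_mul_of_lt_of_le hp' hq'.le)
        (inv_le_inv_iff.2 hp)) (inv_le_inv_iff.2 hq)
    _ = x * x := by
      rw [← zpow_add, ← zpow_add, ← zpow_add, show p + 1 + (q + 1) + -p + -q = 2 by ring, zpow_two]

omit harch in
theorem exists_one_lt_mul_self_le (hdense : ∀ c : G, 1 < c → ∃ y, 1 < y ∧ y < c) {c : G}
    (hc : 1 < c) : ∃ x, 1 < x ∧ x * x ≤ c := by
  obtain ⟨y, hy, hyc⟩ := hdense c hc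
  rcases le_total y (y⁻¹ * c) with h | h
  · exact ⟨y, hy, by simpa using mul_le_mul_right h y⟩
  · exact ⟨y⁻¹ * c, lt_inv_mul_iff_mul_lt.2 (by simpa using hyc),
      by simpa using mul_le_mul_left h (y⁻¹ * c)⟩

theorem mul_comm_of_forall_exists_lt_pow (g h : G) : g * h = h * g := by
  by_cases hdisc : ∃ z, IsLeast {x : G | 1 < x} z
  · obtain ⟨z, hz⟩ := hdisc
    obtain ⟨k, rfl⟩ := exists_eq_zpow_of_isLeast harch hz g
    obtain ⟨l, rfl⟩ := exists_eq_zpow_of_isLeast harch hz h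
    exact (Commute.zpow_zpow_self z k l).eq
  have hdense : ∀ c : G, 1 < c → ∃ y, 1 < y ∧ y < c := fun c hc ↦ by
    by_contra! h
    exact hdisc ⟨c, hc, fun y hy ↦ h y hy⟩
  have hle : ∀ g h : G, ⁅g, h⁆ ≤ 1 := fun g h ↦ le_of_not_gt fun hc ↦ by
    obtain ⟨x, hx, hxc⟩ := exists_one_lt_mul_self_le hdense hc
    exact (hxc.trans_lt (commutatorElement_lt_mul_self harch hx g h)).false
  refine commutatorElement_eq_one_iff_mul_comm.1 (le_antisymm (hle g h) ?_)
  rw [← inv_le_one', commutatorElement_inv]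
  exact hle h g

end BiOrdered

namespace LeftOrder

variable {G : Type*} [Group G] (lam : LeftOrder G)

/-- Its `<` is `lam.lt` by definition. -/
noncomputable abbrev toLinearOrder : LinearOrder G :=
  have : IsStrictTotalOrder G lam.lt :=
    { trichotomous := fun a b hab hba ↦ by_contra fun h ↦ (lam.total a b h).elim hab hba
      irrefl := lam.irrefl
      trans := lam.trans }
  let _ := Classical.decRel lam.lt
  linearOrderOfSTO lam.lt

theorem mulLeftMono : letI := lam.toLinearOrder; MulLeftMono G :=
  let _ := lam.toLinearOrder
  have : MulLeftStrictMono G := ⟨fun g _ _ ↦ lam.mul_left _ _ g⟩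
  mulLeftMono_of_mulLeftStrictMono G

theorem one_lt_inv_iff {g : G} : lam.lt 1 g⁻¹ ↔ lam.lt g 1 :=
  ⟨fun h ↦ by simpa using lam.mul_left _ _ g h, fun h ↦ by simpa using lam.mul_left _ _ g⁻¹ h⟩

def IsDeterminedBy (F : Finset G) : Prop :=
  (∀ f ∈ F, lam.lt 1 f) ∧ ∀ μ : LeftOrder G, (∀ f ∈ F, μ.lt 1 f) → μ = lam

def lex (T : Additive G →+ ℝ) : LeftOrder G where
  lt u v := T (.ofMul u) < T (.ofMul v) ∨ T (.ofMul u) = T (.ofMul v) ∧ lam.lt u v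
  irrefl g := by simp [lam.irrefl]
  trans f g h := by
    rintro (hfg | ⟨efg, hfg⟩) (hgh | ⟨egh, hgh⟩)
    · exact Or.inl (hfg.trans hgh)
    · exact Or.inl (egh ▸ hfg)
    · exact Or.inl (efg ▸ hgh)
    · exact Or.inr ⟨efg.trans egh, lam.trans _ _ _ hfg hgh⟩
  total f g hfg := by
    rcases lt_trichotomy (T (.ofMul f)) (T (.ofMul g)) with h | h | h
    · exact Or.inl (Or.inl h)
    · exact (lam.total f g hfg).imp (fun h' ↦ Or.inr ⟨h, h'⟩) fun h' ↦ Or.inr ⟨h.symm, h'⟩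
    · exact Or.inr (Or.inl h)
  mul_left f g h := by
    simp only [ofMul_mul, map_add, add_lt_add_iff_left, add_right_inj]
    exact Or.imp_right (And.imp_right (lam.mul_left f g h))

variable {lam}

theorem exists_finset_forall_mem_of_mem_subbasis {t : Set (LeftOrder G)}
    (ht : ∃ g : G, t = {μ | μ.lt 1 g} ∨ t = {μ | ¬ μ.lt 1 g}) (hlam : lam ∈ t) :
    ∃ s : Finset G, (∀ f ∈ s, lam.lt 1 f) ∧ ∀ μ : LeftOrder G, (∀ f ∈ s, μ.lt 1 f) → μ ∈ t := by
  obtain ⟨g, rfl | rfl⟩ := ht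
  · exact ⟨{g}, by simpa using hlam, by simp⟩
  by_cases hg : g = 1
  · exact ⟨∅, by simp, fun μ _ ↦ hg ▸ μ.irrefl 1⟩
  have hg' : lam.lt g 1 := (lam.total g 1 hg).resolve_right hlam
  refine ⟨{g⁻¹}, by simpa [one_lt_inv_iff] using hg', fun μ hμ hμg ↦ ?_⟩
  have := (μ.one_lt_inv_iff).1 (by simpa using hμ)
  exact μ.irrefl 1 (μ.trans _ _ _ hμg this)

theorem exists_isDeterminedBy (hiso : lam.IsIsolated) : ∃ F : Finset G, lam.IsDeterminedBy F := by
  classical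
  obtain ⟨_, ⟨T, ⟨hTfin, hTsub⟩, rfl⟩, hlam, hT⟩ :=
    (TopologicalSpace.isTopologicalBasis_of_subbasis rfl).exists_subset_of_mem_open
      (mem_singleton lam) hiso
  choose! s hs using fun t ht ↦ exists_finset_forall_mem_of_mem_subbasis (hTsub ht) (hlam t ht)
  refine ⟨hTfin.toFinset.biUnion s, fun f hf ↦ ?_, fun μ hμ ↦ hT fun t ht ↦ ?_⟩
  · obtain ⟨t, ht, hf⟩ := Finset.mem_biUnion.1 hf
    exact (hs t (hTfin.mem_toFinset.1 ht)).1 f hf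
  · exact (hs t ht).2 μ fun f hf ↦ hμ f (Finset.mem_biUnion.2 ⟨t, hTfin.mem_toFinset.2 ht, hf⟩)

def mulRight (x : G) : LeftOrder G where
  lt u v := lam.lt (u * x) (v * x)
  irrefl _ := lam.irrefl _
  trans _ _ _ := lam.trans _ _ _
  total _ _ h := lam.total _ _ ((mul_left_injective x).ne h)
  mul_left f g h hfg := by simpa only [mul_assoc] using lam.mul_left _ _ h hfg

theorem IsDeterminedBy.lt_mul_right_iff {F : Finset G} (hF : lam.IsDeterminedBy F) {x : G}
    (hx : ∀ f ∈ F, lam.lt x (f * x)) (u v : G) : lam.lt (u * x) (v * x) ↔ lam.lt u v :=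
  Iff.of_eq (congrArg (fun μ : LeftOrder G ↦ μ.lt u v)
    (hF.2 (lam.mulRight x) fun f hf ↦ by simpa [mulRight] using hx f hf))

theorem lex_ne_of_lt_zero {T : Additive G →+ ℝ} {g : G} (hg : lam.lt 1 g)
    (hT : T (.ofMul g) < 0) : lam.lex T ≠ lam := by
  intro h
  have hg' : (lam.lex T).lt 1 g := by rwa [h]
  rcases hg' with hg' | ⟨hg', -⟩ <;> simp only [ofMul_one, map_zero] at hg' <;> linarith

theorem IsDeterminedBy.exists_rat_mul_eq {F : Finset G} (hF : lam.IsDeterminedBy F)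
    {ψ : Additive G →+ ℝ} (hψ : ∀ g h, lam.lt g h ↔ ψ (.ofMul g) < ψ (.ofMul h))
    {a : G} (ha : lam.lt 1 a) (b : G) : ∃ q : ℚ, ψ (.ofMul b) = q * ψ (.ofMul a) := by
  have hpos (g : G) : lam.lt 1 g ↔ 0 < ψ (.ofMul g) := by simpa using hψ 1 g
  by_contra! hb
  have hirr : Irrational (ψ (.ofMul b) / ψ (.ofMul a)) := fun ⟨q, hq⟩ ↦
    hb q (by rw [hq, div_mul_cancel₀ _ ((hpos a).1 ha).ne'])
  obtain ⟨χ, hχa, hχb⟩ := Module.exists_dual_apply_eq_zero_apply_eq_one (K := ℚ)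
    (x := ψ (.ofMul b)) (y := ψ (.ofMul a)) fun h ↦ by
      obtain ⟨q, hq⟩ := Submodule.mem_span_singleton.1 h
      exact hb q (by rw [← hq, Rat.smul_def])
  let χG : Additive G →+ ℝ := (Rat.castHom ℝ).toAddMonoidHom.comp (χ.toAddMonoidHom.comp ψ)
  obtain ⟨ε, hε, hεF⟩ := F.exists_pos_forall_pos_add_mul (q := fun f ↦ χG (.ofMul f))
    fun f hf ↦ (hpos f).1 (hF.1 f hf)
  obtain ⟨g, hg, hTg⟩ := ψ.exists_pos_add_mul_neg ((hpos a).1 ha) hirr (χ := χG)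
    (by simp [χG, hχa]) (by simp [χG, hχb]) hε
  exact lex_ne_of_lt_zero (T := ψ + ε • χG) ((hpos g.toMul).2 hg) (by simpa using hTg)
    (hF.2 _ fun f hf ↦ Or.inl (by simpa using hεF f hf))

end LeftOrder

theorem isolated_leftOrder_no_proper_convex_rational_general
    {G : Type*} [Group G] (lam : LeftOrder G) (hiso : lam.IsIsolated)
    (hconv : ∀ H : Subgroup G, lam.IsConvex H → H = ⊥ ∨ H = ⊤) :
    ∃ φ : G → ℚ, (∀ g g' : G, φ (g * g') = φ g + φ g') ∧ Function.Injective φ ∧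
      ((∀ g g' : G, lam.lt g g' ↔ φ g < φ g') ∨
       (∀ g g' : G, lam.lt g g' ↔ φ g' < φ g)) := by
  rcases subsingleton_or_nontrivial G with hG | hG
  · refine ⟨0, fun _ _ ↦ (add_zero 0).symm, Function.injective_of_subsingleton _,
      Or.inl fun g g' ↦ ?_⟩
    rw [Subsingleton.elim g g']
    exact iff_of_false (lam.irrefl g') (lt_irrefl 0)
  let _ := lam.toLinearOrder
  have := lam.mulLeftMono
  have hconv' (H : Subgroup G) (hH : (H : Set G).OrdConnected) : H = ⊥ ∨ H = ⊤ :=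
    hconv H fun _ _ _ h₁ h₂ l₁ l₂ ↦ hH.out h₁ h₂ ⟨le_of_lt l₁, le_of_lt l₂⟩
  obtain ⟨a, ha⟩ := exists_one_lt_of_nontrivial (G := G)
  obtain ⟨F, hF⟩ := lam.exists_isDeterminedBy hiso
  have : MulRightStrictMono G := mulRightStrictMono_of_forall_lt_mul hconv' ha hF.1
    fun x hx u v ↦ (hF.lt_mul_right_iff hx u v).2
  have := mulRightMono_of_mulRightStrictMono G
  have harch : ∀ a : G, 1 < a → ∀ g, ∃ n : ℕ, g < a ^ n :=
    fun _ ↦ exists_lt_pow_of_forall_ordConnected hconv'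
  obtain ⟨ψ, hψ⟩ :=
    exists_addMonoidHom_real_strictMono (mul_comm_of_forall_exists_lt_pow harch) harch
  obtain ⟨φ, hφ_mul, hφ⟩ := exists_strictMono_rat_of_forall_eq_rat_mul hψ
    (by simpa using hψ (a := .ofMul 1) (b := .ofMul a) ha)
    (hF.exists_rat_mul_eq (fun _ _ ↦ hψ.lt_iff_lt.symm) ha)
  exact ⟨φ, hφ_mul, hφ.injective, Or.inl fun _ _ ↦ hφ.lt_iff_lt.symm⟩

/-- If `λ` is an isolated left order on a countable group `G` whose only
`λ`-convex subgroups are `{e}` and `G`, then there is an injective homomorphism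
`φ : G → (ℚ, +)` which is either order-preserving or order-reversing with respect to `λ`.
In particular `G` is isomorphic to a subgroup of `(ℚ,+)` and `λ` is the order induced by
such an embedding into `ℚ ⊂ ℝ`, or its reciprocal. -/
theorem isolated_leftOrder_no_proper_convex_rational
    {G : Type*} [Group G] [Countable G] (lam : LeftOrder G) (hiso : lam.IsIsolated)
    (hconv : ∀ H : Subgroup G, lam.IsConvex H → H = ⊥ ∨ H = ⊤) :
    ∃ φ : G → ℚ, (∀ g g' : G, φ (g * g') = φ g + φ g') ∧ Function.Injective φ ∧
      ((∀ g g' : G, lam.lt g g' ↔ φ g < φ g') ∨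
       (∀ g g' : G, lam.lt g g' ↔ φ g' < φ g)) :=
  isolated_leftOrder_no_proper_convex_rational_general lam hiso hconv
end

section
/- Let G be a countable group admitting a subnormal series G = G₀ ⊳ G₁ ⊳ ⋯ ⊳ Gₙ ⊳ G_{n+1} = {e} such that each quotient G_i/G_{i+1} is a nontrivial rational group, and such that for every 0 ≤ i ≤ n−1 the subgroup G_{i+2} is normal in G_i and the quotient G_i/G_{i+2} is not bi-orderable. Then G admits exactly 2^{n+1} left orders, i.e., |LO(G)| = 2^{n+1}. -/
/-- A rational group: an (automatically abelian) group embeddable into `(ℚ, +)`. -/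
def IsRationalGroup (H : Type*) [Group H] : Prop :=
  ∃ f : H → ℚ, (∀ a b : H, f (a * b) = f a + f b) ∧ Function.Injective f

/-- A group is bi-orderable if it admits a strict total order invariant under both
left and right multiplication. -/
def IsBiorderable (H : Type*) [Group H] : Prop :=
  ∃ r : H → H → Prop, (∀ a, ¬ r a a) ∧ (∀ a b c, r a b → r b c → r a c) ∧
    (∀ a b, a ≠ b → r a b ∨ r b a) ∧
    (∀ a b c, r a b → r (c * a) (c * b)) ∧ (∀ a b c, r a b → r (a * c) (b * c))

/-- A rational series `G = G₀ ⊳ G₁ ⊳ ⋯ ⊳ G_{n+1} = {e}`: each `G_{i+1}` is a normal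
subgroup of `G_i` and each quotient `G_i/G_{i+1}` is a nontrivial rational group. -/
def IsRationalSeries {G : Type*} [Group G] (n : ℕ) (Gs : ℕ → Subgroup G) : Prop :=
  Gs 0 = ⊤ ∧ Gs (n + 1) = ⊥ ∧
  ∀ i ≤ n, Gs (i + 1) ≤ Gs i ∧
    ∃ _ : ((Gs (i + 1)).subgroupOf (Gs i)).Normal,
      IsRationalGroup (↥(Gs i) ⧸ (Gs (i + 1)).subgroupOf (Gs i)) ∧
      Nontrivial (↥(Gs i) ⧸ (Gs (i + 1)).subgroupOf (Gs i))

/-- The Tararin condition: for `0 ≤ i ≤ n − 1`, the subgroup `G_{i+2}` is normal in `G_i`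
and the quotient `G_i/G_{i+2}` is not bi-orderable. -/
def TararinCondition {G : Type*} [Group G] (n : ℕ) (Gs : ℕ → Subgroup G) : Prop :=
  ∀ i, i + 2 ≤ n + 1 →
    ∃ _ : ((Gs (i + 2)).subgroupOf (Gs i)).Normal,
      ¬ IsBiorderable (↥(Gs i) ⧸ (Gs (i + 2)).subgroupOf (Gs i))

namespace Tararin

variable {G : Type*} [Group G]

/-- Positive cone conditions for a left order. -/
def IsCone (P : Set G) : Prop :=
  (1 : G) ∉ P ∧ (∀ a ∈ P, ∀ b ∈ P, a * b ∈ P) ∧ (∀ g : G, g ≠ 1 → g ∈ P ∨ g⁻¹ ∈ P)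

theorem IsCone.not_both {P : Set G} (h : IsCone P) {g : G} (hg : g ∈ P) : g⁻¹ ∉ P := by
  intro hg'
  exact h.1 (by simpa using h.2.1 g hg g⁻¹ hg')

theorem IsCone.inv_mem {P : Set G} (h : IsCone P) {g : G} (hg : g ≠ 1) (hgP : g ∉ P) :
    g⁻¹ ∈ P := (h.2.2 g hg).resolve_left hgP

theorem IsCone.mem_iff_not_inv {P : Set G} (h : IsCone P) {g : G} (hg : g ≠ 1) :
    g ∈ P ↔ g⁻¹ ∉ P := by
  constructor
  · exact h.not_both
  · intro hi
    rcases h.2.2 g hg with h1 | h1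
    · exact h1
    · exact absurd h1 hi

/-- Left orders correspond to positive cones. -/
noncomputable def leftOrderEquivCone (G : Type*) [Group G] :
    LeftOrder G ≃ {P : Set G // IsCone P} where
  toFun o := ⟨{g | o.lt 1 g}, by
    refine ⟨o.irrefl 1, ?_, ?_⟩
    · intro a ha b hb
      exact o.trans 1 a (a * b) ha (by simpa using o.mul_left 1 b a hb)
    · intro g hg
      rcases o.total 1 g (fun h => hg h.symm) with h | h
      · exact Or.inl h
      · exact Or.inr (by simpa using o.mul_left g 1 g⁻¹ h)⟩
  invFun P := {
    lt := fun a b => a⁻¹ * b ∈ P.1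
    irrefl := fun g h => P.2.1 (by simpa using h)
    trans := fun f g h h1 h2 => by
      have := P.2.2.1 _ h1 _ h2
      simpa [mul_assoc] using this
    total := fun f g hfg => by
      have h1 : f⁻¹ * g ≠ 1 := by
        intro h
        apply hfg
        have : f * (f⁻¹ * g) = f * 1 := by rw [h]
        simpa [mul_assoc] using this.symm
      rcases P.2.2.2 _ h1 with h | h
      · exact Or.inl h
      · exact Or.inr (by simpa using h)
    mul_left := fun f g h hl => by simpa [mul_assoc] using hl }
  left_inv o := by
    have key : ∀ a b, o.lt a b ↔ a⁻¹ * b ∈ {g | o.lt 1 g} := by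
      intro a b
      constructor
      · intro h
        simpa using o.mul_left a b a⁻¹ h
      · intro h
        simpa [mul_assoc] using o.mul_left 1 (a⁻¹ * b) a h
    cases o with
    | mk lt i t tot m =>
      simp only [LeftOrder.mk.injEq]
      funext a b
      simp only [eq_iff_iff]
      exact (key a b).symm
  right_inv P := by
    ext g
    simp

theorem card_leftOrder_eq_card_cone (G : Type*) [Group G] :
    Nat.card (LeftOrder G) = Nat.card {P : Set G // IsCone P} :=
  Nat.card_congr (leftOrderEquivCone G)

/-- Additive-style maps kill 1, negate inverses, scale powers. -/
theorem addmap_one {H : Type*} [Group H] {f : H → ℚ}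
    (hf : ∀ a b : H, f (a * b) = f a + f b) : f 1 = 0 := by
  have := hf 1 1
  simp at this
  linarith

theorem addmap_inv {H : Type*} [Group H] {f : H → ℚ}
    (hf : ∀ a b : H, f (a * b) = f a + f b) (a : H) : f a⁻¹ = - f a := by
  have := hf a a⁻¹
  simp [addmap_one hf] at this
  linarith

theorem addmap_pow {H : Type*} [Group H] {f : H → ℚ}
    (hf : ∀ a b : H, f (a * b) = f a + f b) (a : H) (n : ℕ) : f (a ^ n) = n * f a := by
  induction n with
  | zero => simpa using addmap_one hf
  | succ k ih => rw [pow_succ, hf, ih]; push_cast; ring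

theorem addmap_zpow {H : Type*} [Group H] {f : H → ℚ}
    (hf : ∀ a b : H, f (a * b) = f a + f b) (a : H) (n : ℤ) : f (a ^ n) = n * f a := by
  cases n with
  | ofNat k => simpa using addmap_pow hf a k
  | negSucc k =>
      rw [zpow_negSucc, addmap_inv hf, addmap_pow hf]
      push_cast; ring

theorem IsCone.pow_mem {P : Set G} (h : IsCone P) {g : G} (hg : g ∈ P) :
    ∀ n : ℕ, 0 < n → g ^ n ∈ P := by
  intro n hn
  induction n with
  | zero => omega
  | succ k ih =>
      rcases Nat.eq_zero_or_pos k with hk | hk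
      · simpa [hk] using hg
      · rw [pow_succ]
        exact h.2.1 _ (ih hk) _ hg

theorem exists_commensurate {q q' : ℚ} (hq : q ≠ 0) (hq' : q' ≠ 0)
    (hsign : 0 < q ↔ 0 < q') : ∃ m k : ℕ, 0 < m ∧ 0 < k ∧ (m : ℚ) * q = (k : ℚ) * q' := by
  refine ⟨q'.num.natAbs * q.den, q.num.natAbs * q'.den, ?_, ?_, ?_⟩
  · have h1 : q'.num ≠ 0 := Rat.num_ne_zero.mpr hq'
    positivity
  · have h1 : q.num ≠ 0 := Rat.num_ne_zero.mpr hq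
    positivity
  · push_cast
    rw [mul_assoc, mul_assoc]
    have e1 : (q.den : ℚ) * q = q.num := by rw [mul_comm]; exact_mod_cast Rat.mul_den_eq_num q
    have e2 : (q'.den : ℚ) * q' = q'.num := by rw [mul_comm]; exact_mod_cast Rat.mul_den_eq_num q'
    rw [e1, e2]
    rcases lt_trichotomy q 0 with h | h | h
    · have h1 : q' < 0 := by
        by_contra hc
        push_neg at hc
        have : 0 < q' := lt_of_le_of_ne hc (Ne.symm hq')
        exact absurd (hsign.mpr this) (by linarith)
      have hn : q.num < 0 := Rat.num_neg.mpr h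
      have hn' : q'.num < 0 := Rat.num_neg.mpr h1
      rw [Nat.cast_natAbs, Nat.cast_natAbs]
      push_cast
      rw [abs_of_neg (by exact_mod_cast hn : (q.num : ℚ) < 0),
        abs_of_neg (by exact_mod_cast hn' : (q'.num : ℚ) < 0)]
      ring
    · exact absurd h hq
    · have h1 : 0 < q' := hsign.mp h
      have hn : 0 < q.num := Rat.num_pos.mpr h
      have hn' : 0 < q'.num := Rat.num_pos.mpr h1
      rw [Nat.cast_natAbs, Nat.cast_natAbs]
      push_cast
      rw [abs_of_pos (by exact_mod_cast hn : (0 : ℚ) < (q.num : ℚ)),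
        abs_of_pos (by exact_mod_cast hn' : (0 : ℚ) < (q'.num : ℚ))]
      ring

section Core

variable {P : Set G} {φ : G → ℚ} {G1 : Subgroup G} {β : G → ℚ} {G2 : Subgroup G} {r : G → ℚ}

/-- Key lemma: if `x ∈ P`, `y⁻¹ ∈ P`, `φ x = φ y` and conjugation by `x` reverses the
top level of `G1`, we get a contradiction. -/
theorem lemmaNeg
    (hP : IsCone P)
    (hφ : ∀ a b : G, φ (a * b) = φ a + φ b)
    (hker : ∀ g : G, φ g = 0 ↔ g ∈ G1)
    (hβ : ∀ a ∈ G1, ∀ b ∈ G1, β (a * b) = β a + β b)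
    (hG1n : ∀ g : G, ∀ h ∈ G1, g * h * g⁻¹ ∈ G1)
    (hrconj : ∀ g : G, ∀ h ∈ G1, β (g * h * g⁻¹) = r g * β h)
    (h₀ : G) (h₀1 : h₀ ∈ G1) (hβh₀ : β h₀ ≠ 0)
    (C1 : ∀ h ∈ G1, ∀ h' ∈ G1, β h ≠ 0 → β h' ≠ 0 → (0 < β h ↔ 0 < β h') →
      (h ∈ P ↔ h' ∈ P))
    (x y : G) (hx : x ∈ P) (hy : y⁻¹ ∈ P) (hxy : φ x = φ y) (hrx : r x < 0) : False := by
  have β1 : β 1 = 0 := by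
    have := hβ 1 G1.one_mem 1 G1.one_mem
    simp at this; linarith
  have βinv : ∀ a ∈ G1, β a⁻¹ = - β a := by
    intro a ha
    have := hβ a ha a⁻¹ (inv_mem ha)
    simp [β1] at this; linarith
  have βpow : ∀ a ∈ G1, ∀ n : ℕ, β (a ^ n) = n * β a := by
    intro a ha n
    induction n with
    | zero => simpa using β1
    | succ k ih => rw [pow_succ, hβ _ (pow_mem ha k) _ ha, ih]; push_cast; ring
  -- a positive element of G1 with nonzero β
  obtain ⟨hp, hp1, hpβ, hpP⟩ : ∃ hp, hp ∈ G1 ∧ β hp ≠ 0 ∧ hp ∈ P := by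
    have h₀ne : h₀ ≠ 1 := fun h => hβh₀ (by rw [h]; exact β1)
    rcases hP.2.2 h₀ h₀ne with h | h
    · exact ⟨h₀, h₀1, hβh₀, h⟩
    · exact ⟨h₀⁻¹, inv_mem h₀1, by rw [βinv h₀ h₀1]; simpa using hβh₀, h⟩
  have hpinvβ : β hp⁻¹ ≠ 0 := by rw [βinv hp hp1]; simpa using hpβ
  have hpinvnotP : hp⁻¹ ∉ P := hP.not_both hpP
  set b := y⁻¹ * x with hb
  have hbP : b ∈ P := hP.2.1 _ hy _ hx
  have hbG1 : b ∈ G1 := by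
    rw [← hker]
    have : φ (y⁻¹ * x) = φ y⁻¹ + φ x := hφ _ _
    rw [addmap_inv hφ] at this
    rw [hb, this, hxy]; ring
  -- choose N
  obtain ⟨M, hM⟩ : ∃ M : ℕ, β b / β hp < M := exists_nat_gt _
  set N := M + 1 with hN
  have hMN : β b / β hp < N := by
    have : (M : ℚ) ≤ N := by push_cast [hN]; linarith
    linarith
  have hNpos : (0 : ℚ) < N := by positivity
  have hprod : (β b - N * β hp) * β hp < 0 := by
    rcases lt_trichotomy (β hp) 0 with h | h | h
    · have h2 : β b > (N : ℚ) * β hp := by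
        rw [div_lt_iff_of_neg h] at hMN
        linarith
      nlinarith
    · exact absurd h hpβ
    · have h2 : β b < (N : ℚ) * β hp := by
        rw [div_lt_iff₀ h] at hMN
        linarith
      nlinarith
  -- d := x * hp^N * x⁻¹ is not in P
  have hpN1 : hp ^ N ∈ G1 := pow_mem hp1 N
  have hd1 : x * hp ^ N * x⁻¹ ∈ G1 := hG1n _ _ hpN1
  have hβd : β (x * hp ^ N * x⁻¹) = r x * ((N : ℚ) * β hp) := by
    rw [hrconj _ _ hpN1, βpow _ hp1]
  have hβdne : β (x * hp ^ N * x⁻¹) ≠ 0 := by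
    rw [hβd]
    intro hcon
    rcases mul_eq_zero.mp hcon with h | h
    · exact absurd h (ne_of_lt hrx)
    · rcases mul_eq_zero.mp h with h | h
      · exact absurd h (ne_of_gt hNpos)
      · exact hpβ h
  have hsgn : (0 < β (x * hp ^ N * x⁻¹)) ↔ (0 < β hp⁻¹) := by
    rw [hβd, βinv hp hp1]
    constructor
    · intro h
      rcases mul_pos_iff.mp h with ⟨h1, _⟩ | ⟨_, h2⟩
      · exact absurd h1 (not_lt.mpr (le_of_lt hrx))
      · nlinarith
    · intro h
      exact mul_pos_of_neg_of_neg hrx (mul_neg_of_pos_of_neg hNpos (by linarith))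
  have hdnotP : x * hp ^ N * x⁻¹ ∉ P := by
    intro hcon
    exact hpinvnotP ((C1 _ hd1 _ (inv_mem hp1) hβdne hpinvβ hsgn).mp hcon)
  have hdne : x * hp ^ N * x⁻¹ ≠ 1 := by
    intro h
    exact hβdne (by rw [h]; exact β1)
  have hcP : (x * hp ^ N * x⁻¹)⁻¹ ∈ P := (hP.2.2 _ hdne).resolve_left hdnotP
  have hcform : (x * hp ^ N * x⁻¹)⁻¹ = x * (hp ^ N)⁻¹ * x⁻¹ := by group
  rw [hcform] at hcP
  have hwP : (y⁻¹ * (x * (hp ^ N)⁻¹ * x⁻¹)) * x ∈ P :=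
    hP.2.1 _ (hP.2.1 _ hy _ hcP) _ hx
  have hwform : (y⁻¹ * (x * (hp ^ N)⁻¹ * x⁻¹)) * x = b * (hp ^ N)⁻¹ := by
    rw [hb]; group
  rw [hwform] at hwP
  have hwG1 : b * (hp ^ N)⁻¹ ∈ G1 := mul_mem hbG1 (inv_mem hpN1)
  have hβw : β (b * (hp ^ N)⁻¹) = β b - N * β hp := by
    rw [hβ _ hbG1 _ (inv_mem hpN1), βinv _ hpN1, βpow _ hp1]; ring
  have hβwne : β (b * (hp ^ N)⁻¹) ≠ 0 := by
    rw [hβw]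
    intro hcon
    rw [hcon] at hprod
    simp at hprod
  have hsgnw : (0 < β (b * (hp ^ N)⁻¹)) ↔ (0 < β hp⁻¹) := by
    rw [hβw, βinv hp hp1]
    constructor
    · intro h; nlinarith
    · intro h
      nlinarith
  exact hpinvnotP ((C1 _ hwG1 _ (inv_mem hp1) hβwne hpinvβ hsgnw).mp hwP)


theorem mixed_pow_mem {P : Set G} (hP : IsCone P) {a b : G} (ha : a ∈ P) (hb : b ∈ P)
    (m k : ℕ) (hk : 0 < k) : a ^ m * b ^ k ∈ P := by
  rcases Nat.eq_zero_or_pos m with hm | hm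
  · simpa [hm] using hP.pow_mem hb k hk
  · exact hP.2.1 _ (hP.pow_mem ha m hm) _ (hP.pow_mem hb k hk)

theorem auxNeg
    (hP : IsCone P)
    (hφ : ∀ a b : G, φ (a * b) = φ a + φ b)
    (hker : ∀ g : G, φ g = 0 ↔ g ∈ G1)
    (hβ : ∀ a ∈ G1, ∀ b ∈ G1, β (a * b) = β a + β b)
    (hG1n : ∀ g : G, ∀ h ∈ G1, g * h * g⁻¹ ∈ G1)
    (hrconj : ∀ g : G, ∀ h ∈ G1, β (g * h * g⁻¹) = r g * β h)
    (h₀ : G) (h₀1 : h₀ ∈ G1) (hβh₀ : β h₀ ≠ 0)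
    (C1 : ∀ h ∈ G1, ∀ h' ∈ G1, β h ≠ 0 → β h' ≠ 0 → (0 < β h ↔ 0 < β h') →
      (h ∈ P ↔ h' ∈ P))
    (u v : G) (hu : u ∈ P) (hv : v ∈ P) (hφu : 0 < φ u) (hφv : φ v < 0)
    (hneg : r u < 0 ∨ r v < 0) : False := by
  obtain ⟨m, k, hm, hk, hmk⟩ := exists_commensurate (ne_of_gt hφu)
    (by linarith : -φ v ≠ 0) (by constructor <;> intro <;> linarith)
  -- hmk : m * φ u = k * (- φ v)
  rcases hneg with hru | hrv
  · have hYP : u ^ (m - 1) * v ^ k ∈ P := mixed_pow_mem hP hu hv _ k hk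
    have hφY : φ (u ^ (m - 1) * v ^ k) = - φ u := by
      rw [hφ, addmap_pow hφ, addmap_pow hφ]
      have hc : ((m - 1 : ℕ) : ℚ) = (m : ℚ) - 1 := by
        push_cast [Nat.cast_sub hm]
        ring
      rw [hc]; linarith
    refine lemmaNeg hP hφ hker hβ hG1n hrconj h₀ h₀1 hβh₀ C1 u ((u ^ (m - 1) * v ^ k)⁻¹)
      hu ?_ ?_ hru
    · rw [inv_inv]; exact hYP
    · rw [addmap_inv hφ, hφY]; ring
  · have hYP : u ^ m * v ^ (k - 1) ∈ P := by
      rcases Nat.eq_zero_or_pos (k - 1) with hk1 | hk1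
      · simpa [hk1] using hP.pow_mem hu m hm
      · exact mixed_pow_mem hP hu hv m _ hk1
    have hφY : φ (u ^ m * v ^ (k - 1)) = - φ v := by
      rw [hφ, addmap_pow hφ, addmap_pow hφ]
      have hc : ((k - 1 : ℕ) : ℚ) = (k : ℚ) - 1 := by
        push_cast [Nat.cast_sub hk]
        ring
      rw [hc]; linarith
    refine lemmaNeg hP hφ hker hβ hG1n hrconj h₀ h₀1 hβh₀ C1 v ((u ^ m * v ^ (k - 1))⁻¹)
      hv ?_ ?_ hrv
    · rw [inv_inv]; exact hYP
    · rw [addmap_inv hφ, hφY]; ring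

theorem coherence_core
    (hP : IsCone P)
    (hφ : ∀ a b : G, φ (a * b) = φ a + φ b)
    (hker : ∀ g : G, φ g = 0 ↔ g ∈ G1)
    (hβ : ∀ a ∈ G1, ∀ b ∈ G1, β (a * b) = β a + β b)
    (hG1n : ∀ g : G, ∀ h ∈ G1, g * h * g⁻¹ ∈ G1)
    (hrconj : ∀ g : G, ∀ h ∈ G1, β (g * h * g⁻¹) = r g * β h)
    (hβab : ∀ h ∈ G1, ∀ h' ∈ G1, β (h * h' * h⁻¹) = β h')
    (h₀ : G) (h₀1 : h₀ ∈ G1) (hβh₀ : β h₀ ≠ 0)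
    (C1 : ∀ h ∈ G1, ∀ h' ∈ G1, β h ≠ 0 → β h' ≠ 0 → (0 < β h ↔ 0 < β h') →
      (h ∈ P ↔ h' ∈ P))
    (z : G) (hz : r z < 0)
    (g g' : G) (hg : 0 < φ g) (hg' : 0 < φ g') (hgP : g ∈ P) : g' ∈ P := by
  by_contra hg'P
  have hg'ne : g' ≠ 1 := by
    intro h
    rw [h, addmap_one hφ] at hg'
    linarith
  have hv : g'⁻¹ ∈ P := (hP.2.2 g' hg'ne).resolve_left hg'P
  have hφv : φ g'⁻¹ < 0 := by rw [addmap_inv hφ]; linarith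
  have rone : ∀ h ∈ G1, r h = 1 := by
    intro h hh
    have h1 := hrconj h h₀ h₀1
    rw [hβab h hh h₀ h₀1] at h1
    have := mul_right_cancel₀ hβh₀ (by rw [← h1, one_mul] : r h * β h₀ = 1 * β h₀)
    exact this
  have rmul : ∀ a b : G, r (a * b) = r a * r b := by
    intro a b
    have h1 : (a * b) * h₀ * (a * b)⁻¹ = a * (b * h₀ * b⁻¹) * a⁻¹ := by group
    have h2 := hrconj (a * b) h₀ h₀1
    rw [h1, hrconj a _ (hG1n b h₀ h₀1), hrconj b _ h₀1] at h2
    have h3 : r (a * b) * β h₀ = (r a * r b) * β h₀ := by rw [← h2]; ring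
    exact mul_right_cancel₀ hβh₀ h3
  have hzne : z ≠ 1 := by
    intro h
    rw [h, rone 1 G1.one_mem] at hz
    linarith
  have hrzinv : r z⁻¹ < 0 := by
    have h1 : r z * r z⁻¹ = 1 := by
      rw [← rmul]
      simpa using rone 1 G1.one_mem
    nlinarith
  obtain ⟨z', hz'P, hz'r⟩ : ∃ z', z' ∈ P ∧ r z' < 0 := by
    rcases hP.2.2 z hzne with h | h
    · exact ⟨z, h, hz⟩
    · exact ⟨z⁻¹, h, hrzinv⟩
  have hrne : ∀ a : G, r a ≠ 0 := by
    intro a hcon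
    have h1 : r a * r a⁻¹ = 1 := by
      rw [← rmul]
      simpa using rone 1 G1.one_mem
    rw [hcon, zero_mul] at h1
    exact zero_ne_one h1
  have hφz' : φ z' ≠ 0 := by
    intro h
    have h1 : z' ∈ G1 := (hker z').mp h
    rw [rone z' h1] at hz'r
    linarith
  rcases lt_trichotomy (r g) 0 with hru | hru0 | hrupos
  · exact auxNeg hP hφ hker hβ hG1n hrconj h₀ h₀1 hβh₀ C1 g g'⁻¹ hgP hv hg hφv (Or.inl hru)
  · exact hrne g hru0
  · rcases lt_trichotomy (r g'⁻¹) 0 with hrv | hrv0 | hrvpos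
    · exact auxNeg hP hφ hker hβ hG1n hrconj h₀ h₀1 hβh₀ C1 g g'⁻¹ hgP hv hg hφv (Or.inr hrv)
    · exact hrne g'⁻¹ hrv0
    · rcases lt_trichotomy (φ z') 0 with hz1 | hz2 | hz3
      · exact auxNeg hP hφ hker hβ hG1n hrconj h₀ h₀1 hβh₀ C1 g z' hgP hz'P hg hz1
          (Or.inr hz'r)
      · exact hφz' hz2
      · exact auxNeg hP hφ hker hβ hG1n hrconj h₀ h₀1 hβh₀ C1 z' g'⁻¹ hz'P hv hz3 hφv
          (Or.inl hz'r)

end Core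


section Counting

variable {P : Set G} {φ : G → ℚ} {G1 : Subgroup G}

/-- Base case coherence: if `φ` has trivial kernel. -/
theorem coherence_base (hP : IsCone P)
    (hφ : ∀ a b : G, φ (a * b) = φ a + φ b)
    (hker0 : ∀ g : G, φ g = 0 ↔ g = 1)
    (g g' : G) (hg : 0 < φ g) (hg' : 0 < φ g') (hgP : g ∈ P) : g' ∈ P := by
  by_contra hg'P
  have hg'ne : g' ≠ 1 := by
    intro h; rw [h, addmap_one hφ] at hg'; linarith
  have hv : g'⁻¹ ∈ P := (hP.2.2 g' hg'ne).resolve_left hg'P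
  have hφv : φ g'⁻¹ < 0 := by rw [addmap_inv hφ]; linarith
  obtain ⟨m, k, hm, hk, hmk⟩ := exists_commensurate (ne_of_gt hg)
    (by linarith : -φ g'⁻¹ ≠ 0) (by constructor <;> intro <;> linarith)
  have hw : g ^ m * (g'⁻¹) ^ k ∈ P := mixed_pow_mem hP hgP hv m k hk
  have hφw : φ (g ^ m * (g'⁻¹) ^ k) = 0 := by
    rw [hφ, addmap_pow hφ, addmap_pow hφ]; linarith
  have : g ^ m * (g'⁻¹) ^ k = 1 := (hker0 _).mp hφw
  rw [this] at hw
  exact hP.1 hw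

/-- A cone pulls back to a cone on a subgroup. -/
theorem isCone_comap {P : Set G} (hP : IsCone P) (H : Subgroup G) :
    IsCone ((fun h : ↥H => (h : G)) ⁻¹' P) := by
  refine ⟨?_, ?_, ?_⟩
  · simpa using hP.1
  · intro a ha b hb
    exact hP.2.1 _ ha _ hb
  · intro g hg
    have : (g : G) ≠ 1 := by
      intro h
      exact hg (by ext; simpa using h)
    rcases hP.2.2 _ this with h | h
    · exact Or.inl h
    · exact Or.inr (by simpa using h)

/-- From pairwise positivity coherence, conclude the two-sided version. -/
theorem coherence_wrap (hP : IsCone P)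
    (hφ : ∀ a b : G, φ (a * b) = φ a + φ b)
    (hkerφ : ∀ g : G, φ g = 0 ↔ g ∈ G1)
    (CORE : ∀ g g' : G, 0 < φ g → 0 < φ g' → g ∈ P → g' ∈ P)
    (g g' : G) (hg : g ∉ G1) (hg' : g' ∉ G1)
    (hex : ∃ m k : ℕ, 0 < m ∧ 0 < k ∧ g ^ m * (g' ^ k)⁻¹ ∈ G1) : (g ∈ P ↔ g' ∈ P) := by
  obtain ⟨m, k, hm, hk, hw⟩ := hex
  have hφg : φ g ≠ 0 := fun h => hg ((hkerφ g).mp h)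
  have hφg' : φ g' ≠ 0 := fun h => hg' ((hkerφ g').mp h)
  have hrel : (m : ℚ) * φ g = (k : ℚ) * φ g' := by
    have h0 : φ (g ^ m * (g' ^ k)⁻¹) = 0 := (hkerφ _).mpr hw
    rw [hφ, addmap_inv hφ, addmap_pow hφ, addmap_pow hφ] at h0
    linarith
  have hmq : (0 : ℚ) < m := by exact_mod_cast hm
  have hkq : (0 : ℚ) < k := by exact_mod_cast hk
  rcases lt_trichotomy (φ g) 0 with hneg | h0 | hpos
  · have hg'neg : φ g' < 0 := by nlinarith
    have h1 : 0 < φ g⁻¹ := by rw [addmap_inv hφ]; linarith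
    have h2 : 0 < φ g'⁻¹ := by rw [addmap_inv hφ]; linarith
    have hgne : g ≠ 1 := by intro h; exact hφg (by rw [h]; exact addmap_one hφ)
    have hg'ne : g' ≠ 1 := by intro h; exact hφg' (by rw [h]; exact addmap_one hφ)
    constructor
    · intro hgP
      by_contra hg'P
      have : g'⁻¹ ∈ P := (hP.2.2 g' hg'ne).resolve_left hg'P
      have := CORE g'⁻¹ g⁻¹ h2 h1 this
      exact (hP.not_both this) (by simpa using hgP)
    · intro hg'P
      by_contra hgP
      have : g⁻¹ ∈ P := (hP.2.2 g hgne).resolve_left hgP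
      have := CORE g⁻¹ g'⁻¹ h1 h2 this
      exact (hP.not_both this) (by simpa using hg'P)
  · exact absurd h0 hφg
  · have hg'pos : 0 < φ g' := by nlinarith
    exact ⟨fun h => CORE g g' hpos hg'pos h, fun h => CORE g' g hg'pos hpos h⟩

open Classical in
/-- The counting step: cones on `G` are cones on `G1` times a sign. -/
noncomputable def coneEquivStep
    (φ : G → ℚ) (G1 : Subgroup G)
    (hφ : ∀ a b : G, φ (a * b) = φ a + φ b)
    (hkerφ : ∀ g : G, φ g = 0 ↔ g ∈ G1)
    (g₁ : G) (hg₁ : 0 < φ g₁)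
    (COH : ∀ P : Set G, IsCone P → ∀ g g' : G, 0 < φ g → 0 < φ g' → g ∈ P → g' ∈ P) :
    {P : Set G // IsCone P} ≃ {Q : Set ↥G1 // IsCone Q} × Prop where
  toFun P := (⟨(fun h : ↥G1 => (h : G)) ⁻¹' P.1, isCone_comap P.2 G1⟩, g₁ ∈ P.1)
  invFun Qb := ⟨{g | (∃ hm : g ∈ G1, (⟨g, hm⟩ : ↥G1) ∈ Qb.1.1) ∨
      (g ∉ G1 ∧ (0 < φ g ↔ Qb.2))}, by
    obtain ⟨⟨Q, hQ⟩, b⟩ := Qb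
    refine ⟨?_, ?_, ?_⟩
    · rintro (⟨hm, h1⟩ | ⟨hm, -⟩)
      · exact hQ.1 h1
      · exact hm G1.one_mem
    · rintro a (⟨ha, haQ⟩ | ⟨ha, haS⟩) c (⟨hc, hcQ⟩ | ⟨hc, hcS⟩)
      · exact Or.inl ⟨mul_mem ha hc, hQ.2.1 _ haQ _ hcQ⟩
      · refine Or.inr ⟨?_, ?_⟩
        · intro hmem
          exact hc (by
            have : a⁻¹ * (a * c) ∈ G1 := mul_mem (inv_mem ha) hmem
            simpa using this)
        · have h4 : φ (a * c) = φ c := by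
            rw [hφ, (hkerφ a).mpr ha]; ring
          rw [h4]; exact hcS
      · refine Or.inr ⟨?_, ?_⟩
        · intro hmem
          exact ha (by
            have : (a * c) * c⁻¹ ∈ G1 := mul_mem hmem (inv_mem hc)
            simpa [mul_assoc] using this)
        · have h4 : φ (a * c) = φ a := by
            rw [hφ, (hkerφ c).mpr hc]; ring
          rw [h4]; exact haS
      · have h1 : φ a ≠ 0 := fun h => ha ((hkerφ a).mp h)
        have h2 : φ c ≠ 0 := fun h => hc ((hkerφ c).mp h)
        by_cases hs : b
        · have ha' : 0 < φ a := haS.mpr hs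
          have hc' : 0 < φ c := hcS.mpr hs
          refine Or.inr ⟨fun hmem => ?_, ?_⟩
          · have h3 : φ (a * c) = 0 := (hkerφ _).mpr hmem
            rw [hφ] at h3; linarith
          · rw [hφ]
            exact ⟨fun _ => hs, fun _ => by linarith⟩
        · have ha' : φ a < 0 := lt_of_le_of_ne (not_lt.mp (fun hh => hs (haS.mp hh))) h1
          have hc' : φ c < 0 := lt_of_le_of_ne (not_lt.mp (fun hh => hs (hcS.mp hh))) h2
          refine Or.inr ⟨fun hmem => ?_, ?_⟩
          · have h3 : φ (a * c) = 0 := (hkerφ _).mpr hmem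
            rw [hφ] at h3; linarith
          · rw [hφ]
            exact ⟨fun hh => absurd hh (by linarith), fun hh => absurd hh hs⟩
    · intro g hg
      by_cases hm : g ∈ G1
      · have hne : (⟨g, hm⟩ : ↥G1) ≠ 1 := by
          intro h
          exact hg (by simpa using congrArg (fun x : ↥G1 => (x : G)) h)
        rcases hQ.2.2 _ hne with h | h
        · exact Or.inl (Or.inl ⟨hm, h⟩)
        · exact Or.inr (Or.inl ⟨inv_mem hm, h⟩)
      · have hφg : φ g ≠ 0 := fun h => hm ((hkerφ g).mp h)
        rcases lt_trichotomy (φ g) 0 with h1 | h1 | h1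
        · by_cases hs : b
          · refine Or.inr (Or.inr ⟨fun hcon => hm (by simpa using inv_mem hcon), ?_⟩)
            rw [addmap_inv hφ]
            exact ⟨fun _ => hs, fun _ => by linarith⟩
          · exact Or.inl (Or.inr ⟨hm, ⟨fun hh => absurd hh (by linarith), fun hh => absurd hh hs⟩⟩)
        · exact absurd h1 hφg
        · by_cases hs : b
          · exact Or.inl (Or.inr ⟨hm, ⟨fun _ => hs, fun _ => h1⟩⟩)
          · refine Or.inr (Or.inr ⟨fun hcon => hm (by simpa using inv_mem hcon), ?_⟩)
            rw [addmap_inv hφ]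
            exact ⟨fun hh => absurd hh (by linarith), fun hh => absurd hh hs⟩⟩
  left_inv := by
    rintro ⟨P, hP⟩
    apply Subtype.ext
    ext g
    constructor
    · rintro (⟨hm, h1⟩ | ⟨hm, hS⟩)
      · exact h1
      · have hφg : φ g ≠ 0 := fun h => hm ((hkerφ g).mp h)
        rcases lt_trichotomy (φ g) 0 with h1 | h1 | h1
        · have hg₁P : g₁ ∉ P := fun h => absurd (hS.mpr h) (by linarith)
          have hgne : g ≠ 1 := fun h => hφg (by rw [h]; exact addmap_one hφ)
          by_contra hgP'
          have hginv : g⁻¹ ∈ P := (hP.2.2 g hgne).resolve_left hgP'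
          have : 0 < φ g⁻¹ := by rw [addmap_inv hφ]; linarith
          exact hg₁P (COH P hP g⁻¹ g₁ this hg₁ hginv)
        · exact absurd h1 hφg
        · exact COH P hP g₁ g hg₁ h1 (hS.mp h1)
    · intro hgP
      by_cases hm : g ∈ G1
      · exact Or.inl ⟨hm, hgP⟩
      · have hφg : φ g ≠ 0 := fun h => hm ((hkerφ g).mp h)
        refine Or.inr ⟨hm, ?_⟩
        rcases lt_trichotomy (φ g) 0 with h1 | h1 | h1
        · constructor
          · intro h; linarith
          · intro hg₁P
            have h2 : 0 < φ g⁻¹ := by rw [addmap_inv hφ]; linarith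
            have : g⁻¹ ∈ P := COH P hP g₁ g⁻¹ hg₁ h2 hg₁P
            exact absurd hgP (by simpa using hP.not_both this)
        · exact absurd h1 hφg
        · exact ⟨fun _ => COH P hP g g₁ h1 hg₁ hgP, fun _ => h1⟩
  right_inv := by
    rintro ⟨⟨Q, hQ⟩, b⟩
    have hg₁m : g₁ ∉ G1 := fun h => absurd ((hkerφ g₁).mpr h) (by linarith)
    refine Prod.ext ?_ ?_
    · apply Subtype.ext
      ext h
      simp only [Set.mem_preimage]
      constructor
      · rintro (⟨hm, h1⟩ | ⟨hm, -⟩)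
        · exact h1
        · exact absurd h.2 hm
      · intro hQh
        exact Or.inl ⟨h.2, hQh⟩
    · show (_ ∨ _) = b
      apply propext
      constructor
      · rintro (⟨hm, -⟩ | ⟨-, hS⟩)
        · exact absurd hm hg₁m
        · exact hS.mp hg₁
      · intro hb
        exact Or.inr ⟨hg₁m, ⟨fun _ => hb, fun _ => hg₁⟩⟩

end Counting

theorem card_prop : Nat.card Prop = 2 := by
  rw [Nat.card_congr Equiv.propEquivBool]
  simp [Nat.card_eq_fintype_card]

theorem card_cone_base {φ : G → ℚ}
    (hφ : ∀ a b : G, φ (a * b) = φ a + φ b)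
    (hker0 : ∀ g : G, φ g = 0 ↔ g = 1)
    (g₁ : G) (hg₁ : 0 < φ g₁)
    (CORE : ∀ P : Set G, IsCone P → ∀ g g' : G, 0 < φ g → 0 < φ g' → g ∈ P → g' ∈ P) :
    Nat.card {P : Set G // IsCone P} = 2 := by
  have conePos : IsCone {g : G | 0 < φ g} := by
    refine ⟨by simp [addmap_one hφ], ?_, ?_⟩
    · intro a ha b hb
      simp only [Set.mem_setOf_eq] at *
      rw [hφ]; linarith
    · intro g hg
      have : φ g ≠ 0 := fun h => hg ((hker0 g).mp h)
      rcases lt_trichotomy (φ g) 0 with h | h | h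
      · exact Or.inr (by simp only [Set.mem_setOf_eq, addmap_inv hφ]; linarith)
      · exact absurd h this
      · exact Or.inl h
  have coneNeg : IsCone {g : G | φ g < 0} := by
    refine ⟨by simp [addmap_one hφ], ?_, ?_⟩
    · intro a ha b hb
      simp only [Set.mem_setOf_eq] at *
      rw [hφ]; linarith
    · intro g hg
      have : φ g ≠ 0 := fun h => hg ((hker0 g).mp h)
      rcases lt_trichotomy (φ g) 0 with h | h | h
      · exact Or.inl h
      · exact absurd h this
      · exact Or.inr (by simp only [Set.mem_setOf_eq, addmap_inv hφ]; linarith)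
  rw [Nat.card_eq_two_iff]
  refine ⟨⟨_, conePos⟩, ⟨_, coneNeg⟩, ?_, ?_⟩
  · intro h
    have h2 := congrArg (fun s : {P : Set G // IsCone P} => g₁ ∈ s.1) h
    simp only [Set.mem_setOf_eq] at h2
    rw [eq_iff_iff] at h2
    linarith [h2.mp hg₁]
  · rw [Set.eq_univ_iff_forall]
    rintro ⟨P, hP⟩
    by_cases hg₁P : g₁ ∈ P
    · left
      apply Subtype.ext
      ext g
      simp only [Set.mem_setOf_eq]
      constructor
      · intro hgP
        rcases lt_trichotomy (φ g) 0 with h | h | h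
        · have h2 : 0 < φ g⁻¹ := by rw [addmap_inv hφ]; linarith
          have := CORE P hP g₁ g⁻¹ hg₁ h2 hg₁P
          exact absurd hgP (by simpa using hP.not_both this)
        · exact absurd hgP (by rw [(hker0 g).mp h]; exact hP.1)
        · exact h
      · intro h
        exact CORE P hP g₁ g hg₁ h hg₁P
    · right
      apply Subtype.ext
      ext g
      simp only [Set.mem_setOf_eq]
      constructor
      · intro hgP
        rcases lt_trichotomy (φ g) 0 with h | h | h
        · exact h
        · exact absurd hgP (by rw [(hker0 g).mp h]; exact hP.1)
        · exact absurd (CORE P hP g g₁ h hg₁ hgP) hg₁P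
      · intro h
        have hgne : g ≠ 1 := by
          intro hc
          rw [hc, addmap_one hφ] at h
          linarith
        rcases hP.2.2 g hgne with h1 | h1
        · exact h1
        · have h2 : 0 < φ g⁻¹ := by rw [addmap_inv hφ]; linarith
          exact absurd (CORE P hP g⁻¹ g₁ h2 hg₁ h1) hg₁P
/-- Extract a level map `β : G → ℚ` from rationality of the quotient `S / T`. -/
theorem level_data (S T : Subgroup G) (hTS : T ≤ S)
    (hnorm : (T.subgroupOf S).Normal)
    (hrat : IsRationalGroup (↥S ⧸ T.subgroupOf S))
    (hnt : Nontrivial (↥S ⧸ T.subgroupOf S)) :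
    ∃ β : G → ℚ,
      (∀ a, a ∈ S → ∀ b, b ∈ S → β (a * b) = β a + β b) ∧
      (∀ g, g ∈ S → (β g = 0 ↔ g ∈ T)) ∧
      (∀ h, h ∈ S → ∀ h', h' ∈ S → β (h * h' * h⁻¹) = β h') ∧
      (∃ h₀, h₀ ∈ S ∧ β h₀ ≠ 0) := by
  classical
  haveI := hnorm
  obtain ⟨f, hadd, hinj⟩ := hrat
  have hf1 : f 1 = 0 := addmap_one hadd
  refine ⟨fun g => if h : g ∈ S then f (QuotientGroup.mk ⟨g, h⟩) else 0, ?_, ?_, ?_, ?_⟩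
  · intro a ha b hb
    dsimp only
    rw [dif_pos (mul_mem ha hb), dif_pos ha, dif_pos hb]
    have e : (⟨a * b, mul_mem ha hb⟩ : ↥S) = ⟨a, ha⟩ * ⟨b, hb⟩ := rfl
    rw [e, QuotientGroup.mk_mul]
    exact hadd _ _
  · intro g hg
    dsimp only
    rw [dif_pos hg]
    constructor
    · intro h
      have : QuotientGroup.mk (⟨g, hg⟩ : ↥S) = (1 : ↥S ⧸ T.subgroupOf S) := by
        apply hinj
        rw [h, hf1]
      have h2 : (⟨g, hg⟩ : ↥S) ∈ T.subgroupOf S := (QuotientGroup.eq_one_iff _).mp this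
      exact Subgroup.mem_subgroupOf.mp h2
    · intro h
      have h2 : (⟨g, hg⟩ : ↥S) ∈ T.subgroupOf S := Subgroup.mem_subgroupOf.mpr h
      rw [(QuotientGroup.eq_one_iff _).mpr h2, hf1]
  · intro h hh h' hh'
    have hcomm : ∀ x y : ↥S ⧸ T.subgroupOf S, x * y = y * x := by
      intro x y
      apply hinj
      rw [hadd, hadd]; ring
    have hmem : h * h' * h⁻¹ ∈ S := mul_mem (mul_mem hh hh') (inv_mem hh)
    dsimp only
    rw [dif_pos hmem, dif_pos hh']
    have e : (⟨h * h' * h⁻¹, hmem⟩ : ↥S) = ⟨h, hh⟩ * ⟨h', hh'⟩ * (⟨h, hh⟩)⁻¹ := rfl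
    rw [e, QuotientGroup.mk_mul, QuotientGroup.mk_mul, QuotientGroup.mk_inv]
    rw [hcomm (QuotientGroup.mk ⟨h, hh⟩) (QuotientGroup.mk ⟨h', hh'⟩)]
    rw [mul_assoc, mul_inv_cancel, mul_one]
  · obtain ⟨q, hq⟩ := exists_ne (1 : ↥S ⧸ T.subgroupOf S)
    obtain ⟨x, hx⟩ := Quotient.exists_rep q
    refine ⟨(x : G), x.2, ?_⟩
    dsimp only
    rw [dif_pos x.2]
    have e : (⟨(x : G), x.2⟩ : ↥S) = x := rfl
    rw [e]
    intro hcon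
    apply hq
    rw [← hx]
    have : QuotientGroup.mk x = (1 : ↥S ⧸ T.subgroupOf S) := by
      apply hinj; rw [hcon, hf1]
    exact this

/-- Build a biorder on the quotient from a suitable positivity predicate. -/
theorem isBiorderable_mk {G0 G2' : Subgroup G}
    (hnorm : (G2'.subgroupOf G0).Normal)
    (pos : G → Prop)
    (hwd : ∀ w : G, ∀ c₁, c₁ ∈ G2' → ∀ c₂, c₂ ∈ G2' → (pos (c₁⁻¹ * w * c₂) ↔ pos w))
    (hone : ¬ pos 1)
    (hmul : ∀ a b, pos a → pos b → pos (a * b))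
    (htotal : ∀ g : G, g ∉ G2' → pos g ∨ pos g⁻¹)
    (hconj : ∀ c g : G, pos g → pos (c * g * c⁻¹)) :
    IsBiorderable (↥G0 ⧸ G2'.subgroupOf G0) := by
  haveI := hnorm
  refine ⟨fun a b => Quotient.liftOn₂ a b (fun x y => pos ((x : G)⁻¹ * y)) ?_, ?_, ?_, ?_, ?_, ?_⟩
  · intro a₁ b₁ a₂ b₂ h₁ h₂
    apply propext
    show pos ((a₁ : G)⁻¹ * b₁) ↔ pos ((a₂ : G)⁻¹ * b₂)
    have m₁ : ((a₁⁻¹ * a₂ : ↥G0) : G) ∈ G2' :=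
      Subgroup.mem_subgroupOf.mp (QuotientGroup.leftRel_apply.mp h₁)
    have m₂ : ((b₁⁻¹ * b₂ : ↥G0) : G) ∈ G2' :=
      Subgroup.mem_subgroupOf.mp (QuotientGroup.leftRel_apply.mp h₂)
    have e : (a₂ : G)⁻¹ * (b₂ : G) =
        ((a₁⁻¹ * a₂ : ↥G0) : G)⁻¹ * ((a₁ : G)⁻¹ * (b₁ : G)) * ((b₁⁻¹ * b₂ : ↥G0) : G) := by
      push_cast
      group
    constructor
    · intro h
      rw [e]
      exact (hwd _ _ m₁ _ m₂).mpr h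
    · intro h
      rw [e] at h
      exact (hwd _ _ m₁ _ m₂).mp h
  · intro a
    refine Quotient.inductionOn a ?_
    intro x
    show ¬ pos ((x : G)⁻¹ * x)
    simpa using hone
  · intro a b c
    refine Quotient.inductionOn₃ a b c ?_
    intro x y z h₁ h₂
    show pos ((x : G)⁻¹ * z)
    have h₁' : pos ((x : G)⁻¹ * y) := h₁
    have h₂' : pos ((y : G)⁻¹ * z) := h₂
    have h3 := hmul _ _ h₁' h₂'
    have h4 : ((x : G)⁻¹ * y) * ((y : G)⁻¹ * z) = (x : G)⁻¹ * z := by group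
    rwa [h4] at h3
  · intro a b hab
    revert hab
    refine Quotient.inductionOn₂ a b ?_
    intro x y hab
    have h1 : (x : G)⁻¹ * y ∉ G2' := by
      intro hc
      apply hab
      exact Quotient.sound (QuotientGroup.leftRel_apply.mpr
        (Subgroup.mem_subgroupOf.mpr (by push_cast; exact hc)))
    rcases htotal _ h1 with h | h
    · exact Or.inl h
    · right
      show pos ((y : G)⁻¹ * x)
      have e : ((x : G)⁻¹ * y)⁻¹ = (y : G)⁻¹ * x := by group
      rwa [e] at h
  · intro a b c
    refine Quotient.inductionOn₃ a b c ?_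
    intro x y z h
    have h' : pos ((x : G)⁻¹ * y) := h
    show pos (((z * x : ↥G0) : G)⁻¹ * ((z * y : ↥G0) : G))
    have e : ((z * x : ↥G0) : G)⁻¹ * ((z * y : ↥G0) : G) = (x : G)⁻¹ * y := by
      push_cast
      group
    rwa [e]
  · intro a b c
    refine Quotient.inductionOn₃ a b c ?_
    intro x y z h
    have h' : pos ((x : G)⁻¹ * y) := h
    show pos (((x * z : ↥G0) : G)⁻¹ * ((y * z : ↥G0) : G))
    have e : ((x * z : ↥G0) : G)⁻¹ * ((y * z : ↥G0) : G) =
        ((z : G))⁻¹ * ((x : G)⁻¹ * y) * (((z : G))⁻¹)⁻¹ := by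
      push_cast
      group
    rw [e]
    exact hconj _ _ h'

theorem isBiorderable_of_mulEquiv {A B : Type*} [Group A] [Group B] (e : A ≃* B)
    (h : IsBiorderable A) : IsBiorderable B := by
  obtain ⟨r, hi, ht, hto, hl, hr⟩ := h
  refine ⟨fun x y => r (e.symm x) (e.symm y), fun a => hi _, fun a b c => ht _ _ _, ?_, ?_, ?_⟩
  · intro a b hab
    exact hto _ _ (fun hcon => hab (by simpa using congrArg e hcon))
  · intro a b c hab
    simpa [map_mul] using hl _ _ (e.symm c) hab
  · intro a b c hab
    simpa [map_mul] using hr _ _ (e.symm c) hab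

theorem exists_commensurateZ (q q' : ℚ) (hq' : q' ≠ 0) :
    ∃ mz kz : ℤ, mz ≠ 0 ∧ (mz : ℚ) * q = (kz : ℚ) * q' := by
  refine ⟨q'.num * (q.den : ℤ), q.num * (q'.den : ℤ), ?_, ?_⟩
  · exact mul_ne_zero (Rat.num_ne_zero.mpr hq') (by exact_mod_cast Rat.den_ne_zero q)
  · push_cast
    have e1 : (q.den : ℚ) * q = q.num := by rw [mul_comm]; exact_mod_cast Rat.mul_den_eq_num q
    have e2 : (q'.den : ℚ) * q' = q'.num := by rw [mul_comm]; exact_mod_cast Rat.mul_den_eq_num q'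
    rw [mul_assoc, mul_assoc, e1, e2]
    ring

universe u

theorem main_induction (n : ℕ) : ∀ (G : Type u) [Group G] (Gs : ℕ → Subgroup G),
    IsRationalSeries n Gs → TararinCondition n Gs →
    Nat.card {P : Set G // IsCone P} = 2 ^ (n + 1) ∧
    (∀ P : Set G, IsCone P → ∀ g g' : G, g ∉ Gs 1 → g' ∉ Gs 1 →
      (∃ m k : ℕ, 0 < m ∧ 0 < k ∧ g ^ m * (g' ^ k)⁻¹ ∈ Gs 1) → (g ∈ P ↔ g' ∈ P)) := by
  induction n with
  | zero =>
    intro G _ Gs hser htar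
    obtain ⟨htop, hbot, hstep⟩ := hser
    have mem0 : ∀ g : G, g ∈ Gs 0 := fun g => by rw [htop]; exact Subgroup.mem_top g
    obtain ⟨hle0, hnorm0, hrat0, hnt0⟩ := hstep 0 (le_refl 0)
    obtain ⟨φ, hφS, hkerS, -, h₀0, h₀0S, hφh₀⟩ :=
      level_data (Gs 0) (Gs 1) hle0 hnorm0 hrat0 hnt0
    have hφ : ∀ a b : G, φ (a * b) = φ a + φ b := fun a b => hφS a (mem0 a) b (mem0 b)
    have hkerφ : ∀ g : G, φ g = 0 ↔ g ∈ Gs 1 := fun g => hkerS g (mem0 g)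
    obtain ⟨g₁, hg₁⟩ : ∃ g₁ : G, 0 < φ g₁ := by
      rcases lt_trichotomy (φ h₀0) 0 with h | h | h
      · exact ⟨h₀0⁻¹, by rw [addmap_inv hφ]; linarith⟩
      · exact absurd h hφh₀
      · exact ⟨h₀0, h⟩
    have hker0 : ∀ g : G, φ g = 0 ↔ g = 1 := by
      intro g
      rw [hkerφ g, show Gs (0 + 1) = ⊥ from hbot, Subgroup.mem_bot]
    constructor
    · have := card_cone_base hφ hker0 g₁ hg₁
        (fun P hP g g' => coherence_base hP hφ hker0 g g')
      simpa using this
    · intro P hP g g' hg hg' hex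
      exact coherence_wrap hP hφ hkerφ
        (fun a b => coherence_base hP hφ hker0 a b) g g' hg hg' hex
  | succ m IH =>
    intro G _ Gs hser htar
    obtain ⟨htop, hbot, hstep⟩ := hser
    have mem0 : ∀ g : G, g ∈ Gs 0 := fun g => by rw [htop]; exact Subgroup.mem_top g
    obtain ⟨hle0, hnorm0, hrat0, hnt0⟩ := hstep 0 (Nat.zero_le _)
    obtain ⟨hle1, hnorm1, hrat1, hnt1⟩ := hstep 1 (by omega)
    obtain ⟨hnorm20, hnb⟩ := htar 0 (by omega)
    obtain ⟨φ, hφS, hkerS, -, h₀0, h₀0S, hφh₀⟩ :=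
      level_data (Gs 0) (Gs 1) hle0 hnorm0 hrat0 hnt0
    have hφ : ∀ a b : G, φ (a * b) = φ a + φ b := fun a b => hφS a (mem0 a) b (mem0 b)
    have hkerφ : ∀ g : G, φ g = 0 ↔ g ∈ Gs 1 := fun g => hkerS g (mem0 g)
    obtain ⟨g₁, hg₁⟩ : ∃ g₁ : G, 0 < φ g₁ := by
      rcases lt_trichotomy (φ h₀0) 0 with h | h | h
      · exact ⟨h₀0⁻¹, by rw [addmap_inv hφ]; linarith⟩
      · exact absurd h hφh₀
      · exact ⟨h₀0, h⟩
    obtain ⟨β, hβS, hβker, hβab, h₀, h₀1, hβh₀⟩ :=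
      level_data (Gs 1) (Gs 2) hle1 hnorm1 hrat1 hnt1
    have hG1n : ∀ g : G, ∀ h, h ∈ Gs 1 → g * h * g⁻¹ ∈ Gs 1 := by
      intro g h hh
      have := hnorm0.conj_mem ⟨h, mem0 h⟩ (Subgroup.mem_subgroupOf.mpr hh) ⟨g, mem0 g⟩
      exact Subgroup.mem_subgroupOf.mp this
    have hG2n : ∀ g : G, ∀ h, h ∈ Gs 2 → g * h * g⁻¹ ∈ Gs 2 := by
      intro g h hh
      have := hnorm20.conj_mem ⟨h, mem0 h⟩ (Subgroup.mem_subgroupOf.mpr hh) ⟨g, mem0 g⟩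
      exact Subgroup.mem_subgroupOf.mp this
    have hβ1 : β 1 = 0 := by
      have := hβS 1 (Gs 1).one_mem 1 (Gs 1).one_mem
      simp at this; linarith
    have hβinv : ∀ a, a ∈ Gs 1 → β a⁻¹ = - β a := by
      intro a ha
      have := hβS a ha a⁻¹ (inv_mem ha)
      simp [hβ1] at this; linarith
    have hβpow : ∀ a, a ∈ Gs 1 → ∀ nn : ℕ, β (a ^ nn) = nn * β a := by
      intro a ha nn
      induction nn with
      | zero => simpa using hβ1
      | succ kk ihk => rw [pow_succ, hβS _ (pow_mem ha kk) _ ha, ihk]; push_cast; ring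
    have hβzpow : ∀ a, a ∈ Gs 1 → ∀ t : ℤ, β (a ^ t) = t * β a := by
      intro a ha t
      cases t with
      | ofNat kk => simpa using hβpow a ha kk
      | negSucc kk => rw [zpow_negSucc, hβinv _ (pow_mem ha _), hβpow a ha]; push_cast; ring
    have hrconj : ∀ g : G, ∀ w, w ∈ Gs 1 →
        β (g * w * g⁻¹) = (β (g * h₀ * g⁻¹) / β h₀) * β w := by
      intro g w hw
      by_cases hβw : β w = 0
      · have hw2 : w ∈ Gs 2 := (hβker w hw).mp hβw
        have hconj2 : g * w * g⁻¹ ∈ Gs 2 := hG2n g w hw2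
        rw [hβw, mul_zero]
        exact (hβker _ (hle1 hconj2)).mpr hconj2
      · obtain ⟨mz, kz, hmz, hcomm⟩ := exists_commensurateZ (β w) (β h₀) hβh₀
        have hu1 : w ^ mz * (h₀ ^ kz)⁻¹ ∈ Gs 1 :=
          mul_mem (zpow_mem hw mz) (inv_mem (zpow_mem h₀1 kz))
        have hβu : β (w ^ mz * (h₀ ^ kz)⁻¹) = 0 := by
          rw [hβS _ (zpow_mem hw mz) _ (inv_mem (zpow_mem h₀1 kz)),
            hβinv _ (zpow_mem h₀1 kz), hβzpow _ hw, hβzpow _ h₀1]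
          linarith [hcomm]
        have hu2 : w ^ mz * (h₀ ^ kz)⁻¹ ∈ Gs 2 := (hβker _ hu1).mp hβu
        have hc2 : g * (w ^ mz * (h₀ ^ kz)⁻¹) * g⁻¹ ∈ Gs 2 := hG2n _ _ hu2
        have hβc0 : β (g * (w ^ mz * (h₀ ^ kz)⁻¹) * g⁻¹) = 0 :=
          (hβker _ (hle1 hc2)).mpr hc2
        have hexpand : g * (w ^ mz * (h₀ ^ kz)⁻¹) * g⁻¹ =
            (g * w * g⁻¹) ^ mz * ((g * h₀ * g⁻¹) ^ kz)⁻¹ := by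
          rw [conj_zpow, conj_zpow]
          group
        rw [hexpand] at hβc0
        have hm1 : g * w * g⁻¹ ∈ Gs 1 := hG1n g w hw
        have hm2 : g * h₀ * g⁻¹ ∈ Gs 1 := hG1n g h₀ h₀1
        rw [hβS _ (zpow_mem hm1 mz) _ (inv_mem (zpow_mem hm2 kz)),
          hβinv _ (zpow_mem hm2 kz), hβzpow _ hm1, hβzpow _ hm2] at hβc0
        have hmzq : (mz : ℚ) ≠ 0 := by exact_mod_cast hmz
        rw [div_mul_eq_mul_div, eq_div_iff hβh₀]
        apply mul_left_cancel₀ hmzq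
        linear_combination (β h₀) * hβc0 - (β (g * h₀ * g⁻¹)) * hcomm
    have hrne : ∀ g : G, β (g * h₀ * g⁻¹) / β h₀ ≠ 0 := by
      intro g hc
      have h1 : β (g * h₀ * g⁻¹) = 0 := by
        rcases div_eq_zero_iff.mp hc with h | h
        · exact h
        · exact absurd h hβh₀
      have h2 : g * h₀ * g⁻¹ ∈ Gs 2 := (hβker _ (hG1n g h₀ h₀1)).mp h1
      have h3 := hG2n g⁻¹ _ h2
      have h4 : g⁻¹ * (g * h₀ * g⁻¹) * g⁻¹⁻¹ = h₀ := by group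
      rw [h4] at h3
      exact hβh₀ ((hβker _ h₀1).mpr h3)
    have hzex : ∃ z : G, β (z * h₀ * z⁻¹) / β h₀ < 0 := by
      by_contra hno
      push_neg at hno
      have hpos' : ∀ g : G, 0 < β (g * h₀ * g⁻¹) / β h₀ :=
        fun g => lt_of_le_of_ne (hno g) (Ne.symm (hrne g))
      apply hnb
      refine isBiorderable_mk hnorm20 (fun g => 0 < φ g ∨ (φ g = 0 ∧ 0 < β g))
        ?_ ?_ ?_ ?_ ?_
      · intro w c₁ hc₁ c₂ hc₂
        have hc₁1 : c₁ ∈ Gs 1 := hle1 hc₁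
        have hc₂1 : c₂ ∈ Gs 1 := hle1 hc₂
        have hφ1 : φ c₁ = 0 := (hkerφ c₁).mpr hc₁1
        have hφ2 : φ c₂ = 0 := (hkerφ c₂).mpr hc₂1
        have hφe : φ (c₁⁻¹ * w * c₂) = φ w := by
          rw [hφ, hφ, addmap_inv hφ, hφ1, hφ2]; ring
        show (0 < φ (c₁⁻¹ * w * c₂) ∨ (φ (c₁⁻¹ * w * c₂) = 0 ∧ 0 < β (c₁⁻¹ * w * c₂))) ↔
          (0 < φ w ∨ (φ w = 0 ∧ 0 < β w))
        by_cases hw1 : φ w = 0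
        · have hwG1 : w ∈ Gs 1 := (hkerφ w).mp hw1
          have hβc₁ : β c₁ = 0 := (hβker c₁ hc₁1).mpr hc₁
          have hβc₂ : β c₂ = 0 := (hβker c₂ hc₂1).mpr hc₂
          have hβe : β (c₁⁻¹ * w * c₂) = β w := by
            rw [hβS _ (mul_mem (inv_mem hc₁1) hwG1) _ hc₂1,
              hβS _ (inv_mem hc₁1) _ hwG1, hβinv _ hc₁1, hβc₁, hβc₂]
            ring
          rw [hφe, hβe]
        · constructor
          · rintro (h | ⟨h1, h2⟩)
            · rw [hφe] at h; exact Or.inl h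
            · rw [hφe] at h1; exact absurd h1 hw1
          · rintro (h | ⟨h1, h2⟩)
            · exact Or.inl (by rw [hφe]; exact h)
            · exact absurd h1 hw1
      · rintro (h | ⟨h1, h2⟩)
        · rw [addmap_one hφ] at h; linarith
        · rw [hβ1] at h2; linarith
      · intro a b ha hb
        rcases ha with ha | ⟨ha1, ha2⟩ <;> rcases hb with hb | ⟨hb1, hb2⟩
        · exact Or.inl (by rw [hφ]; linarith)
        · exact Or.inl (by rw [hφ]; linarith)
        · exact Or.inl (by rw [hφ]; linarith)
        · refine Or.inr ⟨by rw [hφ]; linarith, ?_⟩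
          have haG : a ∈ Gs 1 := (hkerφ a).mp ha1
          have hbG : b ∈ Gs 1 := (hkerφ b).mp hb1
          rw [hβS _ haG _ hbG]; linarith
      · intro g hg2
        rcases lt_trichotomy (φ g) 0 with h | h | h
        · exact Or.inr (Or.inl (by rw [addmap_inv hφ]; linarith))
        · have hgG1 : g ∈ Gs 1 := (hkerφ g).mp h
          have hβg : β g ≠ 0 := fun hc => hg2 ((hβker g hgG1).mp hc)
          rcases lt_trichotomy (β g) 0 with h2 | h2 | h2
          · refine Or.inr (Or.inr ⟨by rw [addmap_inv hφ]; linarith, ?_⟩)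
            rw [hβinv _ hgG1]; linarith
          · exact absurd h2 hβg
          · exact Or.inl (Or.inr ⟨h, h2⟩)
        · exact Or.inl (Or.inl h)
      · intro c g hg
        rcases hg with h | ⟨h1, h2⟩
        · refine Or.inl ?_
          have he : φ (c * g * c⁻¹) = φ g := by rw [hφ, hφ, addmap_inv hφ]; ring
          rw [he]; exact h
        · refine Or.inr ⟨by rw [hφ, hφ, addmap_inv hφ]; linarith, ?_⟩
          have hgG1 : g ∈ Gs 1 := (hkerφ g).mp h1
          rw [hrconj c g hgG1]
          exact mul_pos (hpos' c) h2
    obtain ⟨z, hz⟩ := hzex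
    -- the induced series on G1
    have hchain : ∀ i : ℕ, i ≤ m → Gs (i + 1) ≤ Gs 1 := by
      intro i
      induction i with
      | zero => intro _; exact le_refl _
      | succ j ihj =>
        intro hj
        exact le_trans (hstep (j + 1) (by omega)).1 (ihj (by omega))
    have hser' : IsRationalSeries m (fun i => (Gs (i + 1)).subgroupOf (Gs 1)) := by
      refine ⟨Subgroup.subgroupOf_self _, ?_, ?_⟩
      · show (Gs (m + 1 + 1)).subgroupOf (Gs 1) = ⊥
        rw [hbot]
        exact Subgroup.bot_subgroupOf _
      · intro i hi
        obtain ⟨hlei, hnormi, hrati, hnti⟩ := hstep (i + 1) (by omega)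
        have hle' : Gs (i + 1) ≤ Gs 1 := hchain i hi
        set E := Subgroup.subgroupOfEquivOfLe hle' with hE
        have ecoe : ∀ x : ↥((Gs (i + 1)).subgroupOf (Gs 1)),
            ((E x : ↥(Gs (i + 1))) : G) = ((x : ↥(Gs 1)) : G) := by
          intro x; simp [hE]
        have hmm1 : ∀ x : ↥((Gs (i + 1)).subgroupOf (Gs 1)),
            x ∈ ((Gs (i + 1 + 1)).subgroupOf (Gs 1)).subgroupOf
              ((Gs (i + 1)).subgroupOf (Gs 1)) ↔
            E x ∈ (Gs (i + 2)).subgroupOf (Gs (i + 1)) := by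
          intro x
          rw [Subgroup.mem_subgroupOf, Subgroup.mem_subgroupOf, Subgroup.mem_subgroupOf, ecoe x]
        haveI hni : ((Gs (i + 2)).subgroupOf (Gs (i + 1))).Normal := hnormi
        have hcomap : ((Gs (i + 1 + 1)).subgroupOf (Gs 1)).subgroupOf
            ((Gs (i + 1)).subgroupOf (Gs 1)) =
            Subgroup.comap E.toMonoidHom ((Gs (i + 2)).subgroupOf (Gs (i + 1))) := by
          ext x
          rw [Subgroup.mem_comap]
          exact hmm1 x
        haveI hnS' : (((Gs (i + 1 + 1)).subgroupOf (Gs 1)).subgroupOf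
            ((Gs (i + 1)).subgroupOf (Gs 1))).Normal := by
          rw [hcomap]; exact hni.comap _
        have hmap : Subgroup.map E.toMonoidHom (((Gs (i + 1 + 1)).subgroupOf (Gs 1)).subgroupOf
            ((Gs (i + 1)).subgroupOf (Gs 1))) = (Gs (i + 2)).subgroupOf (Gs (i + 1)) := by
          rw [hcomap]
          exact Subgroup.map_comap_eq_self_of_surjective E.surjective _
        have Equot := QuotientGroup.congr _ _ E hmap
        refine ⟨?_, hnS', ?_, ?_⟩
        · intro x hx
          rw [Subgroup.mem_subgroupOf] at hx ⊢
          exact hlei hx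
        · obtain ⟨f, hfa, hfi⟩ := hrati
          refine ⟨f ∘ Equot, ?_, hfi.comp Equot.injective⟩
          intro a b
          show f (Equot (a * b)) = f (Equot a) + f (Equot b)
          rw [map_mul]
          exact hfa _ _
        · haveI := hnti
          exact Equot.toEquiv.nontrivial
    have htar' : TararinCondition m (fun i => (Gs (i + 1)).subgroupOf (Gs 1)) := by
      intro i hi
      obtain ⟨hnormt, hnbt⟩ := htar (i + 1) (by omega)
      have hle' : Gs (i + 1) ≤ Gs 1 := hchain i (by omega)
      set E := Subgroup.subgroupOfEquivOfLe hle' with hE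
      have ecoe : ∀ x : ↥((Gs (i + 1)).subgroupOf (Gs 1)),
          ((E x : ↥(Gs (i + 1))) : G) = ((x : ↥(Gs 1)) : G) := by
        intro x; simp [hE]
      have hmm1 : ∀ x : ↥((Gs (i + 1)).subgroupOf (Gs 1)),
          x ∈ ((Gs (i + 2 + 1)).subgroupOf (Gs 1)).subgroupOf
            ((Gs (i + 1)).subgroupOf (Gs 1)) ↔
          E x ∈ (Gs (i + 1 + 2)).subgroupOf (Gs (i + 1)) := by
        intro x
        rw [Subgroup.mem_subgroupOf, Subgroup.mem_subgroupOf, Subgroup.mem_subgroupOf, ecoe x]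
      haveI hni : ((Gs (i + 1 + 2)).subgroupOf (Gs (i + 1))).Normal := hnormt
      have hcomap : ((Gs (i + 2 + 1)).subgroupOf (Gs 1)).subgroupOf
          ((Gs (i + 1)).subgroupOf (Gs 1)) =
          Subgroup.comap E.toMonoidHom ((Gs (i + 1 + 2)).subgroupOf (Gs (i + 1))) := by
        ext x
        rw [Subgroup.mem_comap]
        exact hmm1 x
      haveI hnS' : (((Gs (i + 2 + 1)).subgroupOf (Gs 1)).subgroupOf
          ((Gs (i + 1)).subgroupOf (Gs 1))).Normal := by
        rw [hcomap]; exact hni.comap _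
      have hmap : Subgroup.map E.toMonoidHom (((Gs (i + 2 + 1)).subgroupOf (Gs 1)).subgroupOf
          ((Gs (i + 1)).subgroupOf (Gs 1))) = (Gs (i + 1 + 2)).subgroupOf (Gs (i + 1)) := by
        rw [hcomap]
        exact Subgroup.map_comap_eq_self_of_surjective E.surjective _
      have Equot := QuotientGroup.congr _ _ E hmap
      refine ⟨hnS', ?_⟩
      intro hbi
      exact hnbt (isBiorderable_of_mulEquiv Equot hbi)
    obtain ⟨hcard', hcoh'⟩ := IH ↥(Gs 1) (fun i => (Gs (i + 1)).subgroupOf (Gs 1)) hser' htar'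
    have C1 : ∀ P : Set G, IsCone P → ∀ h, h ∈ Gs 1 → ∀ h', h' ∈ Gs 1 →
        β h ≠ 0 → β h' ≠ 0 → (0 < β h ↔ 0 < β h') → (h ∈ P ↔ h' ∈ P) := by
      intro P hP h hh h' hh' hbne hbne' hsgn
      obtain ⟨mm, kk, hmm0, hkk0, hrel⟩ := exists_commensurate hbne hbne' hsgn
      have hx2 : (⟨h, hh⟩ : ↥(Gs 1)) ∉ (Gs (1 + 1)).subgroupOf (Gs 1) := by
        intro hc
        exact hbne ((hβker h hh).mpr (Subgroup.mem_subgroupOf.mp hc))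
      have hx2' : (⟨h', hh'⟩ : ↥(Gs 1)) ∉ (Gs (1 + 1)).subgroupOf (Gs 1) := by
        intro hc
        exact hbne' ((hβker h' hh').mpr (Subgroup.mem_subgroupOf.mp hc))
      have hwit : (⟨h, hh⟩ : ↥(Gs 1)) ^ mm * ((⟨h', hh'⟩ : ↥(Gs 1)) ^ kk)⁻¹ ∈
          (Gs (1 + 1)).subgroupOf (Gs 1) := by
        apply Subgroup.mem_subgroupOf.mpr
        have hcoe : (((⟨h, hh⟩ : ↥(Gs 1)) ^ mm * ((⟨h', hh'⟩ : ↥(Gs 1)) ^ kk)⁻¹ : ↥(Gs 1)) : G)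
            = h ^ mm * (h' ^ kk)⁻¹ := by push_cast; rfl
        rw [hcoe]
        apply (hβker _ (mul_mem (pow_mem hh mm) (inv_mem (pow_mem hh' kk)))).mp
        rw [hβS _ (pow_mem hh mm) _ (inv_mem (pow_mem hh' kk)), hβinv _ (pow_mem hh' kk),
          hβpow _ hh, hβpow _ hh']
        linarith [hrel]
      exact hcoh' ((fun t : ↥(Gs 1) => (t : G)) ⁻¹' P) (isCone_comap hP _)
        ⟨h, hh⟩ ⟨h', hh'⟩ hx2 hx2' ⟨mm, kk, hmm0, hkk0, hwit⟩
    have CORE : ∀ P : Set G, IsCone P → ∀ g g' : G, 0 < φ g → 0 < φ g' → g ∈ P → g' ∈ P := by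
      intro P hP
      exact coherence_core hP hφ hkerφ hβS hG1n hrconj hβab h₀ h₀1 hβh₀ (C1 P hP) z hz
    constructor
    · have e := coneEquivStep φ (Gs 1) hφ hkerφ g₁ hg₁ CORE
      rw [Nat.card_congr e, Nat.card_prod, hcard', card_prop]
      ring
    · intro P hP g g' hg hg' hex
      exact coherence_wrap hP hφ hkerφ (CORE P hP) g g' hg hg' hex

end Tararin

/-- Tararin, sufficiency. If a countable group `G` admits a rational
series `G = G₀ ⊳ G₁ ⊳ ⋯ ⊳ G_{n+1} = {e}` such that for every `0 ≤ i ≤ n−1` the subgroup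
`G_{i+2}` is normal in `G_i` and `G_i/G_{i+2}` is not bi-orderable, then `G` has exactly
`2^{n+1}` left orders. -/
theorem tararin_sufficiency
    {G : Type*} [Group G] [Countable G] (n : ℕ) (Gs : ℕ → Subgroup G)
    (hser : IsRationalSeries n Gs) (htar : TararinCondition n Gs) :
    Nat.card (LeftOrder G) = 2 ^ (n + 1) := by
  rw [Tararin.card_leftOrder_eq_card_cone]
  exact (Tararin.main_induction n G Gs hser htar).1
end

section
/- Let G be a finitely generated group and ρ : G → Homeo₊(ℝ) a homomorphism such that no point of ℝ is fixed by every element of ρ(G). Then the action is cocompact: there exists a compact interval I ⊆ ℝ such that every orbit ρ(G)x intersects I. -/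
/-!
If an orbit were bounded above, its supremum would be a global fixed point; so every orbit is
unbounded in both directions. Fix a finite generating set `S` and choose `a ≤ 0` below all
`s^{±1} 0`. A generator sends any point `z > 0` to `s^{±1} z ≥ s^{±1} 0 ≥ a`, so the orbit,
which contains points above `0` and points below `a`, cannot pass from one side to the other
without meeting `[a, 0]`.
-/

open Set

section

variable {G α : Type*} [Group G] (rho : G →* Equiv.Perm α)

theorem image_range_apply_eq (g : G) (x : α) :
    rho g '' range (fun h => rho h x) = range (fun h => rho h x) := by
  ext y
  constructor
  · rintro ⟨_, ⟨h, rfl⟩, rfl⟩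
    exact ⟨g * h, by simp⟩
  · rintro ⟨h, rfl⟩
    exact ⟨rho (g⁻¹ * h) x, ⟨g⁻¹ * h, rfl⟩, by simp [← Equiv.Perm.mul_apply, ← map_mul]⟩

theorem apply_csSup_range_apply [ConditionallyCompleteLinearOrder α] {g : G}
    (hg : StrictMono (rho g)) {x : α} (hbdd : BddAbove (range fun h => rho h x)) :
    rho g (sSup (range fun h => rho h x)) = sSup (range fun h => rho h x) := by
  have := (hg.orderIsoOfSurjective _ (rho g).surjective).map_csSup' (range_nonempty _) hbdd
  rwa [StrictMono.coe_orderIsoOfSurjective, image_range_apply_eq] at this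

theorem exists_lt_apply_of_forall_exists_apply_ne [ConditionallyCompleteLinearOrder α]
    (hmono : ∀ g, StrictMono (rho g)) (hnofix : ∀ x, ∃ g, rho g x ≠ x) (x c : α) :
    ∃ g, c < rho g x := by
  by_contra! hle
  have hbdd : BddAbove (range fun h => rho h x) := ⟨c, forall_mem_range.2 hle⟩
  obtain ⟨g, hg⟩ := hnofix (sSup (range fun h => rho h x))
  exact hg (apply_csSup_range_apply rho (hmono g) hbdd)

theorem exists_apply_lt_of_forall_exists_apply_ne [ConditionallyCompleteLinearOrder α]
    (hmono : ∀ g, StrictMono (rho g)) (hnofix : ∀ x, ∃ g, rho g x ≠ x) (x c : α) :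
    ∃ g, rho g x < c :=
  exists_lt_apply_of_forall_exists_apply_ne (α := αᵒᵈ) rho (fun g => (hmono g).dual) hnofix x c

theorem exists_apply_mem_Icc_of_lt_apply_of_apply_lt [LinearOrder α] {S : Set G}
    (hS : Subgroup.closure S = ⊤) (hmono : ∀ g, Monotone (rho g)) {p a b : α} (hap : a ≤ p)
    (hpb : p ≤ b) (ha : ∀ s ∈ S, a ≤ rho s p ∧ a ≤ rho s⁻¹ p) {x : α} {g₁ g₂ : G}
    (h₁ : b < rho g₁ x) (h₂ : rho g₂ x < a) : ∃ g, rho g x ∈ Icc a b := by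
  by_contra! hout
  -- A generator moves a point above `b ≥ p` to a point above `a`, hence (the
  -- orbit avoiding `[a, b]`) above `b`.
  have hstep : ∀ t, a ≤ rho t p → ∀ g, b < rho (g * g₁) x → b < rho (t * g * g₁) x := by
    intro t ht g hg
    refine lt_of_not_ge fun hle => hout (t * g * g₁) ⟨?_, hle⟩
    calc a ≤ rho t p := ht
      _ ≤ rho t (rho (g * g₁) x) := hmono t (hpb.trans hg.le)
      _ = rho (t * g * g₁) x := by simp [mul_assoc]
  have habove : ∀ g, b < rho (g * g₁) x := fun g =>
    Subgroup.closure_induction_left (p := fun g _ => b < rho (g * g₁) x) (by simpa using h₁)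
      (fun s hs g _ hg => by simpa [mul_assoc] using hstep s (ha s hs).1 g hg)
      (fun s hs g _ hg => by simpa [mul_assoc] using hstep s⁻¹ (ha s hs).2 g hg)
      (hS ▸ Subgroup.mem_top g)
  have := habove (g₂ * g₁⁻¹)
  simp only [inv_mul_cancel_right] at this
  exact (this.trans h₂).not_ge (hap.trans hpb)

end

/-- A finitely generated group acting on `ℝ` by orientation-preserving
homeomorphisms (encoded as strictly monotone bijections of `ℝ`) without a global fixed
point acts cocompactly: some compact interval `[a,b]` meets every orbit. -/
theorem fg_action_without_global_fixed_point_cocompact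
    {G : Type*} [Group G] (hfg : Group.FG G) (rho : G →* Equiv.Perm ℝ)
    (hmono : ∀ g : G, StrictMono ⇑(rho g))
    (hnofix : ∀ x : ℝ, ∃ g : G, rho g x ≠ x) :
    ∃ a b : ℝ, a ≤ b ∧ ∀ x : ℝ, ∃ g : G, rho g x ∈ Set.Icc a b := by
  obtain ⟨S, hS⟩ := hfg
  obtain ⟨a, ha⟩ : BddBelow (insert 0 ((fun s => min (rho s 0) (rho s⁻¹ 0)) '' S)) :=
    ((S.finite_toSet.image _).insert 0).bddBelow
  have ha0 : a ≤ 0 := ha (mem_insert _ _)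
  have hgen : ∀ s ∈ (S : Set G), a ≤ rho s 0 ∧ a ≤ rho s⁻¹ 0 := fun s hs =>
    le_min_iff.1 (ha (mem_insert_of_mem _ (mem_image_of_mem _ hs)))
  refine ⟨a, 0, ha0, fun x => ?_⟩
  obtain ⟨g₁, hg₁⟩ := exists_lt_apply_of_forall_exists_apply_ne rho hmono hnofix x 0
  obtain ⟨g₂, hg₂⟩ := exists_apply_lt_of_forall_exists_apply_ne rho hmono hnofix x a
  exact exists_apply_mem_Icc_of_lt_apply_of_apply_lt rho hS (fun g => (hmono g).monotone) ha0
    le_rfl hgen hg₁ hg₂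
end

section
/- Let H be a subgroup of a group G, let λ₀ be a left order on H, and let λ₁ be a G-invariant linear order on the left coset space G/H (i.e., g₁H <_{λ₁} g₂H implies hg₁H <_{λ₁} hg₂H for all h ∈ G). Then there is a unique left order λ on G such that H is λ-convex, the restriction of λ to H equals λ₀, and for every g ∉ H one has e <_λ g if and only if H <_{λ₁} gH. -/
lemma LeftOrder.lt_iff_one_lt {G : Type*} [Group G] (lam : LeftOrder G) (f g : G) :
    lam.lt f g ↔ lam.lt 1 (f⁻¹ * g) := by
  constructor
  · intro h
    have := lam.mul_left f g f⁻¹ h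
    simpa using this
  · intro h
    have := lam.mul_left 1 (f⁻¹ * g) f h
    simpa using this

lemma LeftOrder.ext' {G : Type*} [Group G] (a b : LeftOrder G) (h : a.lt = b.lt) : a = b := by
  cases a; cases b; cases h; rfl

/-- lexicographic construction. Given a subgroup `H ≤ G`, a left order
`λ₀` on `H` and a `G`-invariant strict linear order `λ₁` on the left coset space `G/H`,
there is a unique left order `λ` on `G` such that `H` is `λ`-convex, `λ` restricts to `λ₀`
on `H`, and for `g ∉ H` one has `e <_λ g` iff `H <_{λ₁} gH`. -/
theorem lexicographic_order_exists_unique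
    {G : Type*} [Group G] (H : Subgroup G) (lam₀ : LeftOrder ↥H)
    (lt₁ : G ⧸ H → G ⧸ H → Prop)
    (h₁irrefl : ∀ x, ¬ lt₁ x x)
    (h₁trans : ∀ x y z, lt₁ x y → lt₁ y z → lt₁ x z)
    (h₁total : ∀ x y, x ≠ y → lt₁ x y ∨ lt₁ y x)
    (h₁inv : ∀ (g g₁ g₂ : G),
      lt₁ (QuotientGroup.mk g₁) (QuotientGroup.mk g₂) →
      lt₁ (QuotientGroup.mk (g * g₁)) (QuotientGroup.mk (g * g₂))) :
    ∃! lam : LeftOrder G,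
      lam.IsConvex H ∧ (∀ a b : ↥H, lam.lt ↑a ↑b ↔ lam₀.lt a b) ∧
      ∀ g : G, g ∉ H →
        (lam.lt 1 g ↔ lt₁ (QuotientGroup.mk (1 : G)) (QuotientGroup.mk g)) := by
  classical
  set L : G → G → Prop := fun f g =>
    lt₁ (QuotientGroup.mk f) (QuotientGroup.mk g) ∨
      ∃ h : f⁻¹ * g ∈ H, lam₀.lt 1 ⟨f⁻¹ * g, h⟩ with hL
  have mkeq : ∀ f g : G, f⁻¹ * g ∈ H → (QuotientGroup.mk f : G ⧸ H) = QuotientGroup.mk g :=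
    fun f g h => (QuotientGroup.eq).mpr h
  have congrH : ∀ (x y : G) (hx : x ∈ H) (hy : y ∈ H), x = y →
      (lam₀.lt 1 ⟨x, hx⟩ ↔ lam₀.lt 1 ⟨y, hy⟩) := by
    rintro x y hx hy rfl; rfl
  have lam₀shift : ∀ a b : ↥H, lam₀.lt a b ↔ lam₀.lt 1 (a⁻¹ * b) :=
    fun a b => lam₀.lt_iff_one_lt a b
  have Lirrefl : ∀ g, ¬ L g g := by
    intro g hg
    rcases hg with h | ⟨h, hlt⟩
    · exact h₁irrefl _ h
    · have : (⟨g⁻¹ * g, h⟩ : ↥H) = 1 := by ext; simp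
      rw [this] at hlt
      exact lam₀.irrefl 1 hlt
  have Ltrans : ∀ f g h, L f g → L g h → L f h := by
    intro f g h hfg hgh
    rcases hfg with h1 | ⟨m1, hlt1⟩ <;> rcases hgh with h2 | ⟨m2, hlt2⟩
    · exact Or.inl (h₁trans _ _ _ h1 h2)
    · exact Or.inl (by rwa [mkeq g h m2] at h1)
    · exact Or.inl (by rwa [← mkeq f g m1] at h2)
    · have mem : f⁻¹ * h ∈ H := by
        have := H.mul_mem m1 m2
        simpa [mul_assoc] using this
      refine Or.inr ⟨mem, ?_⟩
      have key : (⟨f⁻¹ * g, m1⟩ : ↥H) * ⟨g⁻¹ * h, m2⟩ = ⟨f⁻¹ * h, mem⟩ := by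
        ext; simp [mul_assoc]
      have := lam₀.mul_left 1 ⟨g⁻¹ * h, m2⟩ ⟨f⁻¹ * g, m1⟩ hlt2
      rw [mul_one, key] at this
      exact lam₀.trans _ _ _ hlt1 this
  have Ltotal : ∀ f g, f ≠ g → L f g ∨ L g f := by
    intro f g hne
    by_cases hm : f⁻¹ * g ∈ H
    · have hne' : (⟨f⁻¹ * g, hm⟩ : ↥H) ≠ 1 := by
        intro hc
        have : f⁻¹ * g = 1 := congrArg Subtype.val hc
        exact hne (inv_mul_eq_one.mp this)
      rcases lam₀.total 1 ⟨f⁻¹ * g, hm⟩ (Ne.symm hne') with h | h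
      · exact Or.inl (Or.inr ⟨hm, h⟩)
      · have hm' : g⁻¹ * f ∈ H := by simpa using H.inv_mem hm
        refine Or.inr (Or.inr ⟨hm', ?_⟩)
        have := lam₀.mul_left _ _ (⟨f⁻¹ * g, hm⟩)⁻¹ h
        have key : (⟨f⁻¹ * g, hm⟩ : ↥H)⁻¹ * ⟨f⁻¹ * g, hm⟩ = 1 := inv_mul_cancel _
        have key2 : (⟨f⁻¹ * g, hm⟩ : ↥H)⁻¹ * 1 = ⟨g⁻¹ * f, hm'⟩ := by
          ext; simp
        rw [key, key2] at this
        exact this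
    · have hq : (QuotientGroup.mk f : G ⧸ H) ≠ QuotientGroup.mk g := by
        intro hc; exact hm ((QuotientGroup.eq).mp hc)
      rcases h₁total _ _ hq with h | h
      · exact Or.inl (Or.inl h)
      · exact Or.inr (Or.inl h)
  have Lmul : ∀ f g h, L f g → L (h * f) (h * g) := by
    intro f g h hfg
    rcases hfg with h1 | ⟨m, hlt⟩
    · exact Or.inl (h₁inv h f g h1)
    · have e : (h * f)⁻¹ * (h * g) = f⁻¹ * g := by
        simp [mul_assoc]
      refine Or.inr ⟨by rw [e]; exact m, ?_⟩
      exact (congrH _ _ _ m e).mpr hlt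
  set lam : LeftOrder G := ⟨L, Lirrefl, Ltrans, Ltotal, Lmul⟩ with hlam
  have lamlt : ∀ f g, lam.lt f g ↔ L f g := fun _ _ => Iff.rfl
  have resH : ∀ a b : ↥H, lam.lt ↑a ↑b ↔ lam₀.lt a b := by
    intro a b
    have mem : (↑a : G)⁻¹ * ↑b ∈ H := by
      simpa using H.mul_mem (H.inv_mem a.2) b.2
    have subeq : (⟨(↑a : G)⁻¹ * ↑b, mem⟩ : ↥H) = a⁻¹ * b := by ext; simp
    rw [lamlt]
    constructor
    · rintro (h | ⟨m, hlt⟩)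
      · exact absurd (mkeq _ _ mem) (fun hc => h₁irrefl _ (hc ▸ h))
      · rw [lam₀shift a b, ← subeq]
        exact (congrH _ _ m mem rfl).mp hlt
    · intro h
      refine Or.inr ⟨mem, ?_⟩
      rw [lam₀shift a b, ← subeq] at h
      exact h
  have posH : ∀ g : G, g ∉ H →
      (lam.lt 1 g ↔ lt₁ (QuotientGroup.mk (1 : G)) (QuotientGroup.mk g)) := by
    intro g hg
    rw [lamlt]
    constructor
    · rintro (h | ⟨m, _⟩)
      · exact h
      · exact absurd (by simpa using m) hg
    · exact fun h => Or.inl h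
  refine ⟨lam, ⟨?_, resH, posH⟩, ?_⟩
  · intro a b g ha hb hag hgb
    by_contra hg
    have hag' : lt₁ (QuotientGroup.mk a) (QuotientGroup.mk g) := by
      rcases hag with h | ⟨m, _⟩
      · exact h
      · exact absurd (by have := H.mul_mem ha m; simpa using this) hg
    have hgb' : lt₁ (QuotientGroup.mk g) (QuotientGroup.mk b) := by
      rcases hgb with h | ⟨m, _⟩
      · exact h
      · exact absurd (by
          have := H.mul_mem hb (H.inv_mem m)
          simpa [mul_assoc] using this) hg
    have hab : (QuotientGroup.mk a : G ⧸ H) = QuotientGroup.mk b :=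
      mkeq a b (H.mul_mem (H.inv_mem ha) hb)
    rw [hab] at hag'
    exact h₁irrefl _ (h₁trans _ _ _ hag' hgb')
  · intro mu ⟨hconv, hres, hpos⟩
    have key : ∀ x : G, mu.lt 1 x ↔ L 1 x := by
      intro x
      by_cases hx : x ∈ H
      · have h1 : ((1 : ↥H) : G) = 1 := rfl
        have hmem : (1 : G)⁻¹ * x ∈ H := by simpa using hx
        have this' := hres 1 ⟨x, hx⟩
        rw [h1] at this'
        rw [this']
        have subeq : (⟨(1 : G)⁻¹ * x, hmem⟩ : ↥H) = ⟨x, hx⟩ := by ext; simp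
        constructor
        · intro h
          refine Or.inr ⟨hmem, ?_⟩
          rw [subeq]
          have := lam₀shift 1 ⟨x, hx⟩
          simpa using (this.mp h)
        · rintro (h | ⟨m, hlt⟩)
          · exact absurd (mkeq 1 x hmem) (fun hc => h₁irrefl _ (hc ▸ h))
          · have hlt' : lam₀.lt 1 ⟨x, hx⟩ := by
              rw [← subeq]; exact (congrH _ _ m hmem rfl).mp hlt
            have := lam₀shift 1 ⟨x, hx⟩
            rw [this]
            simpa using hlt'
      · rw [hpos x hx]
        constructor
        · intro h; exact Or.inl h
        · rintro (h | ⟨m, _⟩)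
          · exact h
          · exact absurd (by simpa using m) hx
    have main : ∀ f g : G, mu.lt f g ↔ L f g := by
      intro f g
      rw [mu.lt_iff_one_lt, key]
      have e : (1 : G)⁻¹ * (f⁻¹ * g) = f⁻¹ * g := by simp
      constructor
      · rintro (h | ⟨m, hlt⟩)
        · refine Or.inl ?_
          have := h₁inv f 1 (f⁻¹ * g) h
          simpa [mul_assoc] using this
        · have m' : f⁻¹ * g ∈ H := by rw [← e]; exact m
          exact Or.inr ⟨m', (congrH _ _ m m' e).mp hlt⟩
      · rintro (h | ⟨m, hlt⟩)
        · refine Or.inl ?_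
          have := h₁inv f⁻¹ f g h
          simpa using this
        · have m' : (1 : G)⁻¹ * (f⁻¹ * g) ∈ H := by rw [e]; exact m
          exact Or.inr ⟨m', (congrH _ _ m m' e.symm).mp hlt⟩
    refine LeftOrder.ext' mu lam ?_
    funext f g
    exact propext ((main f g).trans (lamlt f g).symm)
end

section
/- Let G be a countable group, λ a left order on G, and x₀ ∈ ℝ. If ρ and ρ' are two homomorphisms G → Homeo₊(ℝ) which are both tight at x₀ and both realize λ at x₀, then there is an orientation-preserving homeomorphism h of ℝ with h(x₀) = x₀ such that h ∘ ρ(g) = ρ'(g) ∘ h for every g ∈ G. -/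
/-! The orbit map `rho g x₀ ↦ rho' g x₀` is an equivariant order isomorphism between the two
orbits. By tightness every gap of the closure of an orbit is a translate of the gap
`(x₀, rho m x₀)`, where `m` is the least element `> 1` of the realized order (when there is none,
the orbit is dense). Transporting an affine identification of the two gaps at `x₀` along the
action gives an equivariant monotone correspondence between the dense sets `G • [x₀, rho m x₀)`
and `G • [x₀, rho' m x₀)`. Such a correspondence extends to an order automorphism of `ℝ`, and
since the extension is continuous and determined on a dense set, it is equivariant. -/

open Set Function

section MonotoneCorrespondence

variable {Γ : Set (ℝ × ℝ)}

noncomputable def supExtension (Γ : Set (ℝ × ℝ)) (x : ℝ) : ℝ :=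
  sSup (Prod.snd '' {u ∈ Γ | u.1 ≤ x})

variable (hΓ : ∀ u ∈ Γ, ∀ v ∈ Γ, u.1 < v.1 ↔ u.2 < v.2)
include hΓ

theorem supExtension_apply_fst {w : ℝ × ℝ} (hw : w ∈ Γ) : supExtension Γ w.1 = w.2 := by
  refine IsGreatest.csSup_eq ⟨⟨w, ⟨hw, le_rfl⟩, rfl⟩, ?_⟩
  rintro _ ⟨u, ⟨hu, huw⟩, rfl⟩
  exact not_lt.1 fun h => huw.not_gt ((hΓ w hw u hu).2 h)

variable (hfst : Dense (Prod.fst '' Γ))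
include hfst

theorem bddAbove_snd_image_le (x : ℝ) : BddAbove (Prod.snd '' {u ∈ Γ | u.1 ≤ x}) := by
  obtain ⟨_, ⟨v, hv, rfl⟩, hxv⟩ := hfst.exists_gt x
  exact ⟨v.2, by rintro _ ⟨u, ⟨hu, hux⟩, rfl⟩; exact ((hΓ u hu v hv).1 (hux.trans_lt hxv)).le⟩

theorem supExtension_monotone : Monotone (supExtension Γ) := by
  intro x y hxy
  obtain ⟨_, ⟨u, hu, rfl⟩, hux⟩ := hfst.exists_lt x
  exact csSup_le_csSup (bddAbove_snd_image_le hΓ hfst y) ⟨u.2, u, ⟨hu, hux.le⟩, rfl⟩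
    (image_mono fun v hv => ⟨hv.1, hv.2.trans hxy⟩)

theorem supExtension_strictMono : StrictMono (supExtension Γ) := by
  intro x y hxy
  obtain ⟨_, ⟨u, hu, rfl⟩, hxu, huy⟩ := hfst.exists_between hxy
  obtain ⟨_, ⟨v, hv, rfl⟩, huv, hvy⟩ := hfst.exists_between huy
  calc supExtension Γ x ≤ supExtension Γ u.1 := supExtension_monotone hΓ hfst hxu.le
    _ = u.2 := supExtension_apply_fst hΓ hu
    _ < v.2 := (hΓ u hu v hv).1 huv
    _ = supExtension Γ v.1 := (supExtension_apply_fst hΓ hv).symm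
    _ ≤ supExtension Γ y := supExtension_monotone hΓ hfst hvy.le

theorem exists_orderIso_extending (hsnd : Dense (Prod.snd '' Γ)) :
    ∃ Ψ : ℝ ≃o ℝ, ∀ u ∈ Γ, Ψ u.1 = u.2 := by
  have hmono := supExtension_monotone hΓ hfst
  have hrange : Prod.snd '' Γ ⊆ range (supExtension Γ) := by
    rintro _ ⟨u, hu, rfl⟩
    exact ⟨u.1, supExtension_apply_fst hΓ hu⟩
  have hsurj : Surjective (supExtension Γ) := by
    refine (hmono.continuous_of_denseRange (hsnd.mono hrange)).surjective
      (hmono.tendsto_atTop_atTop fun b => ?_) (hmono.tendsto_atBot_atBot fun b => ?_)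
    · obtain ⟨_, hy, hby⟩ := hsnd.exists_gt b
      obtain ⟨a, rfl⟩ := hrange hy
      exact ⟨a, hby.le⟩
    · obtain ⟨_, hy, hby⟩ := hsnd.exists_lt b
      obtain ⟨a, rfl⟩ := hrange hy
      exact ⟨a, hby.le⟩
  exact ⟨(supExtension_strictMono hΓ hfst).orderIsoOfSurjective _ hsurj,
    fun u hu => supExtension_apply_fst hΓ hu⟩

end MonotoneCorrespondence

theorem comp_eq_comp_of_eqOn_graph {X Y : Type*} [TopologicalSpace X] [TopologicalSpace Y]
    [T2Space Y] {Γ : Set (X × Y)} (hfst : Dense (Prod.fst '' Γ)) {Ψ : X → Y} {σ : X → X}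
    {σ' : Y → Y} (hΨ : Continuous Ψ) (hσ : Continuous σ) (hσ' : Continuous σ')
    (hgraph : ∀ u ∈ Γ, Ψ u.1 = u.2) (hinv : ∀ u ∈ Γ, (σ u.1, σ' u.2) ∈ Γ) :
    Ψ ∘ σ = σ' ∘ Ψ := by
  refine Continuous.ext_on hfst (hΨ.comp hσ) (hσ'.comp hΨ) ?_
  rintro _ ⟨u, hu, rfl⟩
  simp only [comp_apply, hgraph u hu, hgraph _ (hinv u hu)]

theorem StrictMono.continuous_of_surjective {α β : Type*} [LinearOrder α] [TopologicalSpace α]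
    [OrderTopology α] [LinearOrder β] [TopologicalSpace β] [OrderTopology β] {f : α → β}
    (hf : StrictMono f) (hsurj : Surjective f) : Continuous f :=
  (hf.orderIsoOfSurjective f hsurj).continuous

theorem StrictMono.apply_mem_Ioo_iff {α β : Type*} [LinearOrder α] [Preorder β] {σ : α → β}
    (hσ : StrictMono σ) {a b x : α} : σ x ∈ Ioo (σ a) (σ b) ↔ x ∈ Ioo a b := by
  simp only [mem_Ioo, hσ.lt_iff_lt]

theorem OrderIso.image_insert_Ioo {α : Type*} [Preorder α] (A : α ≃o α) {a : α} (ha : A a = a)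
    (c : α) : A '' insert a (Ioo a c) = insert a (Ioo a (A c)) := by
  rw [image_insert_eq, A.image_Ioo, ha]

theorem exists_orderIso_fix_apply_eq {a b b' : ℝ} (hlt : a < b ↔ a < b') (hgt : b < a ↔ b' < a) :
    ∃ A : ℝ ≃o ℝ, A a = a ∧ A b = b' := by
  rcases eq_or_ne b a with rfl | hba
  · simp only [lt_self_iff_false, false_iff, not_lt] at hlt hgt
    exact ⟨OrderIso.refl ℝ, rfl, le_antisymm hgt hlt⟩
  have hr : 0 < (b' - a) / (b - a) := by
    rcases hba.lt_or_gt with h | h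
    · exact div_pos_of_neg_of_neg (sub_neg.2 (hgt.1 h)) (sub_neg.2 h)
    · exact div_pos (sub_pos.2 (hlt.1 h)) (sub_pos.2 h)
  refine ⟨((OrderIso.addRight (-a)).trans (OrderIso.mulRight₀ _ hr)).trans
    (OrderIso.addRight a), by simp, ?_⟩
  have : b - a ≠ 0 := sub_ne_zero.2 hba
  simp only [OrderIso.trans_apply, OrderIso.addRight_apply, OrderIso.mulRight₀_apply]
  field_simp
  ring

theorem IsClosed.exists_Ioo_gap {C : Set ℝ} (hC : IsClosed C) (hbelow : ¬BddBelow C)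
    (habove : ¬BddAbove C) {x : ℝ} (hx : x ∉ C) :
    ∃ a ∈ C, ∃ b ∈ C, x ∈ Ioo a b ∧ ∀ z ∈ Ioo a b, z ∉ C := by
  obtain ⟨c, hc, hcx⟩ := not_bddBelow_iff.1 hbelow x
  obtain ⟨d, hd, hxd⟩ := not_bddAbove_iff.1 habove x
  have hbdd_le : BddAbove (C ∩ Iic x) := ⟨x, fun _ h => h.2⟩
  have hbdd_ge : BddBelow (C ∩ Ici x) := ⟨x, fun _ h => h.2⟩
  obtain ⟨haC, hax⟩ := (hC.inter isClosed_Iic).csSup_mem ⟨c, hc, hcx.le⟩ hbdd_le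
  obtain ⟨hbC, hxb⟩ := (hC.inter isClosed_Ici).csInf_mem ⟨d, hd, hxd.le⟩ hbdd_ge
  refine ⟨_, haC, _, hbC, ⟨hax.lt_of_ne ?_, hxb.lt_of_ne ?_⟩, fun z hz hzC => ?_⟩
  · rintro h; exact hx (h ▸ haC)
  · rintro h; exact hx (h ▸ hbC)
  · rcases le_total z x with hzx | hxz
    · exact hz.1.not_ge (le_csSup hbdd_le ⟨hzC, hzx⟩)
    · exact hz.2.not_ge (csInf_le hbdd_ge ⟨hzC, hxz⟩)

section Orbits

variable {G : Type*} [Group G] {rho rho' : G →* Equiv.Perm ℝ} {x₀ : ℝ}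

theorem IsTightAt.injective_orbit (htight : IsTightAt rho x₀) :
    Injective fun g => rho g x₀ := by
  intro f g hfg
  have : rho (g⁻¹ * f) x₀ = x₀ := by simp_all [Equiv.Perm.mul_apply]
  exact (inv_mul_eq_one.1 (htight.1 _ this)).symm

theorem IsTightAt.exists_orbit_gap (htight : IsTightAt rho x₀) {x : ℝ}
    (hx : x ∉ closure (orbitSet rho x₀)) :
    ∃ f g : G, x ∈ Ioo (rho f x₀) (rho g x₀) ∧ ∀ j, rho j x₀ ∉ Ioo (rho f x₀) (rho g x₀) := by
  obtain ⟨-, hbelow, habove, hgaps⟩ := htight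
  obtain ⟨a, haC, b, hbC, hxab, hgap⟩ := isClosed_closure.exists_Ioo_gap
    (fun h => hbelow (h.mono subset_closure)) (fun h => habove (h.mono subset_closure)) hx
  have hab := hxab.1.trans hxab.2
  have hpair : closure (orbitSet rho x₀) ∩ Icc a b = {a, b} := by
    ext z
    simp only [mem_inter_iff, mem_Icc, mem_insert_iff, mem_singleton_iff]
    constructor
    · rintro ⟨hzC, haz, hzb⟩
      rcases haz.eq_or_lt with rfl | haz
      · exact Or.inl rfl
      rcases hzb.eq_or_lt with rfl | hzb
      · exact Or.inr rfl
      exact (hgap z ⟨haz, hzb⟩ hzC).elim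
    · rintro (rfl | rfl)
      exacts [⟨haC, le_rfl, hab.le⟩, ⟨hbC, hab.le, le_rfl⟩]
  obtain ⟨⟨f, rfl⟩, ⟨g, rfl⟩⟩ := hgaps a b hab hpair
  exact ⟨f, g, hxab, fun j hj => hgap _ hj (subset_closure ⟨j, rfl⟩)⟩

def IsOrbitSucc (rho : G →* Equiv.Perm ℝ) (x₀ : ℝ) (k : G) : Prop :=
  x₀ < rho k x₀ ∧ ∀ j, rho j x₀ ∉ Ioo x₀ (rho k x₀)

theorem IsTightAt.exists_isOrbitSucc (hmono : ∀ g, StrictMono (rho g))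
    (htight : IsTightAt rho x₀) {x : ℝ} (hx : x ∉ closure (orbitSet rho x₀)) :
    ∃ k f : G, IsOrbitSucc rho x₀ k ∧ rho f x ∈ Ioo x₀ (rho k x₀) := by
  obtain ⟨f, g, hx, hgap⟩ := htight.exists_orbit_gap hx
  have hmem : ∀ y, y ∈ Ioo x₀ (rho (f⁻¹ * g) x₀) ↔ rho f y ∈ Ioo (rho f x₀) (rho g x₀) := by
    intro y
    rw [← (hmono f).apply_mem_Ioo_iff]
    simp [Equiv.Perm.mul_apply]
  have hy : rho f⁻¹ x ∈ Ioo x₀ (rho (f⁻¹ * g) x₀) := (hmem _).2 (by simpa using hx)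
  refine ⟨f⁻¹ * g, f⁻¹, ⟨hy.1.trans hy.2, fun j hj => hgap (f * j) ?_⟩, hy⟩
  simpa [Equiv.Perm.mul_apply] using (hmem _).1 hj

theorem IsOrbitSucc.unique (hinj : Injective fun g => rho g x₀) {k₁ k₂ : G}
    (h₁ : IsOrbitSucc rho x₀ k₁) (h₂ : IsOrbitSucc rho x₀ k₂) : k₁ = k₂ := by
  rcases lt_trichotomy (rho k₁ x₀) (rho k₂ x₀) with h | h | h
  · exact (h₂.2 k₁ ⟨h₁.1, h⟩).elim
  · exact hinj h
  · exact (h₁.2 k₂ ⟨h₂.1, h⟩).elim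

theorem isOrbitSucc_iff (hord : ∀ f g, rho f x₀ < rho g x₀ ↔ rho' f x₀ < rho' g x₀) {k : G} :
    IsOrbitSucc rho x₀ k ↔ IsOrbitSucc rho' x₀ k := by
  have hbase : ∀ g, x₀ < rho g x₀ ↔ x₀ < rho' g x₀ := by simpa using hord 1
  simp only [IsOrbitSucc, mem_Ioo, hbase, hord]

def IsOrbitSuccOrOne (rho : G →* Equiv.Perm ℝ) (x₀ : ℝ) (m : G) : Prop :=
  IsOrbitSucc rho x₀ m ∨ m = 1 ∧ ∀ k, ¬IsOrbitSucc rho x₀ k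

theorem exists_isOrbitSuccOrOne (rho : G →* Equiv.Perm ℝ) (x₀ : ℝ) :
    ∃ m, IsOrbitSuccOrOne rho x₀ m := by
  by_cases h : ∃ k, IsOrbitSucc rho x₀ k
  exacts [h.imp fun _ => Or.inl, ⟨1, Or.inr ⟨rfl, not_exists.1 h⟩⟩]

theorem isOrbitSuccOrOne_iff (hord : ∀ f g, rho f x₀ < rho g x₀ ↔ rho' f x₀ < rho' g x₀)
    {m : G} : IsOrbitSuccOrOne rho x₀ m ↔ IsOrbitSuccOrOne rho' x₀ m := by
  simp only [IsOrbitSuccOrOne, isOrbitSucc_iff hord]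

theorem IsOrbitSuccOrOne.orbit_notMem_Ioo {m : G} (hm : IsOrbitSuccOrOne rho x₀ m) (j : G) :
    rho j x₀ ∉ Ioo x₀ (rho m x₀) := by
  rcases hm with hm | ⟨rfl, -⟩
  · exact hm.2 j
  · simp

theorem IsTightAt.exists_apply_mem_Ioo (hmono : ∀ g, StrictMono (rho g))
    (htight : IsTightAt rho x₀) {m : G} (hm : IsOrbitSuccOrOne rho x₀ m) {x : ℝ}
    (hx : x ∉ closure (orbitSet rho x₀)) : ∃ f, rho f x ∈ Ioo x₀ (rho m x₀) := by
  obtain ⟨k, f, hk, hf⟩ := htight.exists_isOrbitSucc hmono hx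
  rcases hm with hm | ⟨-, hnone⟩
  · exact ⟨f, hm.unique htight.injective_orbit hk ▸ hf⟩
  · exact (hnone k hk).elim

theorem dense_iUnion_image_of_forall_notMem_closure {T : Set ℝ} (hx₀ : x₀ ∈ T)
    (hcover : ∀ x ∉ closure (orbitSet rho x₀), ∃ f, rho f x ∈ T) :
    Dense (⋃ g, rho g '' T) := by
  refine (dense_coborder (s := orbitSet rho x₀)).mono ?_
  rw [coborder_eq_union_closure_compl]
  rintro x (⟨g, rfl⟩ | hx)
  · exact mem_iUnion.2 ⟨g, x₀, hx₀, rfl⟩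
  · obtain ⟨f, hf⟩ := hcover x hx
    exact mem_iUnion.2 ⟨f⁻¹, _, hf, by simp⟩

section FundamentalDomain

-- `insert x₀ (Ioo x₀ c)` is `[x₀, c)` when `x₀ < c` and `{x₀}` when the orbit has no gap at `x₀`.
variable {c : ℝ} (hc : ∀ j, rho j x₀ ∉ Ioo x₀ c)
include hc

theorem lt_orbit_of_mem_insert_Ioo {y : ℝ} (hy : y ∈ insert x₀ (Ioo x₀ c)) {k : G}
    (hk : x₀ < rho k x₀) : y < rho k x₀ := by
  rcases hy with rfl | ⟨-, hyc⟩
  · exact hk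
  · exact lt_of_not_ge fun hky => hc k ⟨hk, hky.trans_lt hyc⟩

theorem apply_lt_apply_of_orbit_lt (hmono : ∀ g, StrictMono (rho g)) {y y' : ℝ}
    (hy : y ∈ insert x₀ (Ioo x₀ c)) (hy' : y' ∈ insert x₀ (Ioo x₀ c)) {g g' : G}
    (hgg' : rho g x₀ < rho g' x₀) : rho g y < rho g' y' := by
  have hk : x₀ < rho (g⁻¹ * g') x₀ := by
    simpa [Equiv.Perm.mul_apply] using hmono g⁻¹ hgg'
  calc rho g y < rho g (rho (g⁻¹ * g') x₀) := hmono g (lt_orbit_of_mem_insert_Ioo hc hy hk)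
    _ = rho g' x₀ := by simp [Equiv.Perm.mul_apply]
    _ ≤ rho g' y' := (hmono g').monotone (hy'.elim ge_of_eq fun h => h.1.le)

theorem apply_lt_apply_iff_lex (hmono : ∀ g, StrictMono (rho g))
    (hinj : Injective fun g => rho g x₀) {y y' : ℝ} (hy : y ∈ insert x₀ (Ioo x₀ c))
    (hy' : y' ∈ insert x₀ (Ioo x₀ c)) {g g' : G} :
    rho g y < rho g' y' ↔ rho g x₀ < rho g' x₀ ∨ g = g' ∧ y < y' := by
  constructor
  · intro h
    rcases lt_trichotomy (rho g x₀) (rho g' x₀) with hlt | heq | hgt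
    · exact Or.inl hlt
    · obtain rfl := hinj heq
      exact Or.inr ⟨rfl, (hmono g).lt_iff_lt.1 h⟩
    · exact absurd h (apply_lt_apply_of_orbit_lt hc hmono hy' hy hgt).asymm
  · rintro (h | ⟨rfl, h⟩)
    exacts [apply_lt_apply_of_orbit_lt hc hmono hy hy' h, hmono g h]

end FundamentalDomain

def conjugacyGraph (rho rho' : G →* Equiv.Perm ℝ) (A : ℝ → ℝ) (S : Set ℝ) : Set (ℝ × ℝ) :=
  ⋃ g, (fun y => (rho g y, rho' g (A y))) '' S

section ConjugacyGraph

variable {A : ℝ → ℝ} {S : Set ℝ}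

theorem mk_mem_conjugacyGraph (g : G) {y : ℝ} (hy : y ∈ S) :
    (rho g y, rho' g (A y)) ∈ conjugacyGraph rho rho' A S :=
  mem_iUnion.2 ⟨g, y, hy, rfl⟩

theorem fst_image_conjugacyGraph :
    Prod.fst '' conjugacyGraph rho rho' A S = ⋃ g, rho g '' S := by
  simp only [conjugacyGraph, image_iUnion, image_image]

theorem snd_image_conjugacyGraph :
    Prod.snd '' conjugacyGraph rho rho' A S = ⋃ g, rho' g '' (A '' S) := by
  simp only [conjugacyGraph, image_iUnion, image_image]

theorem map_mem_conjugacyGraph (k : G) {u : ℝ × ℝ} (hu : u ∈ conjugacyGraph rho rho' A S) :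
    (rho k u.1, rho' k u.2) ∈ conjugacyGraph rho rho' A S := by
  obtain ⟨g, y, hy, rfl⟩ := mem_iUnion.1 hu
  simpa [Equiv.Perm.mul_apply] using
    mk_mem_conjugacyGraph (rho := rho) (rho' := rho') (A := A) (k * g) hy

theorem conjugacyGraph_lt_iff (hmono : ∀ g, StrictMono (rho g))
    (hmono' : ∀ g, StrictMono (rho' g)) (hinj : Injective fun g => rho g x₀)
    (hinj' : Injective fun g => rho' g x₀)
    (hord : ∀ f g, rho f x₀ < rho g x₀ ↔ rho' f x₀ < rho' g x₀) {A : ℝ ≃o ℝ} (hA : A x₀ = x₀)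
    {c : ℝ} (hc : ∀ j, rho j x₀ ∉ Ioo x₀ c) (hc' : ∀ j, rho' j x₀ ∉ Ioo x₀ (A c)) :
    ∀ u ∈ conjugacyGraph rho rho' A (insert x₀ (Ioo x₀ c)),
      ∀ v ∈ conjugacyGraph rho rho' A (insert x₀ (Ioo x₀ c)), u.1 < v.1 ↔ u.2 < v.2 := by
  have hAS {y} (hy : y ∈ insert x₀ (Ioo x₀ c)) : A y ∈ insert x₀ (Ioo x₀ (A c)) :=
    A.image_insert_Ioo hA c ▸ mem_image_of_mem A hy
  intro u hu v hv
  obtain ⟨g, y, hy, rfl⟩ := mem_iUnion.1 hu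
  obtain ⟨g', y', hy', rfl⟩ := mem_iUnion.1 hv
  dsimp only
  rw [apply_lt_apply_iff_lex hc hmono hinj hy hy',
    apply_lt_apply_iff_lex hc' hmono' hinj' (hAS hy) (hAS hy'), hord, A.lt_iff_lt]

end ConjugacyGraph

end Orbits

theorem dynamical_realization_unique_up_to_conjugacy_general
    {G : Type*} [Group G] (lam : LeftOrder G) (x₀ : ℝ)
    (rho rho' : G →* Equiv.Perm ℝ)
    (hmono : ∀ g : G, StrictMono ⇑(rho g)) (hmono' : ∀ g : G, StrictMono ⇑(rho' g))
    (htight : IsTightAt rho x₀) (htight' : IsTightAt rho' x₀)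
    (hreal : RealizesAt rho x₀ lam) (hreal' : RealizesAt rho' x₀ lam) :
    ∃ h : Equiv.Perm ℝ, StrictMono ⇑h ∧ h x₀ = x₀ ∧
      ∀ (g : G) (x : ℝ), h (rho g x) = rho' g (h x) := by
  have hord : ∀ f g, rho f x₀ < rho g x₀ ↔ rho' f x₀ < rho' g x₀ :=
    fun f g => (hreal f g).symm.trans (hreal' f g)
  obtain ⟨m, hm⟩ := exists_isOrbitSuccOrOne rho x₀
  have hm' := (isOrbitSuccOrOne_iff hord).1 hm
  obtain ⟨A, hA₀, hAm⟩ : ∃ A : ℝ ≃o ℝ, A x₀ = x₀ ∧ A (rho m x₀) = rho' m x₀ :=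
    exists_orderIso_fix_apply_eq (by simpa using hord 1 m) (by simpa using hord m 1)
  set Γ := conjugacyGraph rho rho' A (insert x₀ (Ioo x₀ (rho m x₀)))
  have hfst : Dense (Prod.fst '' Γ) := by
    rw [fst_image_conjugacyGraph]
    exact dense_iUnion_image_of_forall_notMem_closure (mem_insert _ _)
      fun x hx => (htight.exists_apply_mem_Ioo hmono hm hx).imp fun _ => mem_insert_of_mem _
  have hsnd : Dense (Prod.snd '' Γ) := by
    rw [snd_image_conjugacyGraph, A.image_insert_Ioo hA₀, hAm]
    exact dense_iUnion_image_of_forall_notMem_closure (mem_insert _ _)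
      fun x hx => (htight'.exists_apply_mem_Ioo hmono' hm' hx).imp fun _ => mem_insert_of_mem _
  obtain ⟨Ψ, hΨ⟩ := exists_orderIso_extending (conjugacyGraph_lt_iff hmono hmono'
    htight.injective_orbit htight'.injective_orbit hord hA₀ hm.orbit_notMem_Ioo
    (hAm ▸ hm'.orbit_notMem_Ioo)) hfst hsnd
  refine ⟨Ψ.toEquiv, Ψ.strictMono, ?_, fun g x => ?_⟩
  · simpa [hA₀] using hΨ _ (mk_mem_conjugacyGraph 1 (mem_insert x₀ _))
  · exact congrFun (comp_eq_comp_of_eqOn_graph hfst Ψ.continuous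
      ((hmono g).continuous_of_surjective (rho g).surjective)
      ((hmono' g).continuous_of_surjective (rho' g).surjective) hΨ
      fun u hu => map_mem_conjugacyGraph g hu) x

/-- uniqueness of the dynamical realization up to conjugacy. Two actions
of `G` on `ℝ` by orientation-preserving homeomorphisms which are both tight at `x₀` and
both realize the same left order `λ` at `x₀` are conjugate by an orientation-preserving
homeomorphism of `ℝ` fixing `x₀`. -/
theorem dynamical_realization_unique_up_to_conjugacy
    {G : Type*} [Group G] [Countable G] (lam : LeftOrder G) (x₀ : ℝ)
    (rho rho' : G →* Equiv.Perm ℝ)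
    (hmono : ∀ g : G, StrictMono ⇑(rho g)) (hmono' : ∀ g : G, StrictMono ⇑(rho' g))
    (htight : IsTightAt rho x₀) (htight' : IsTightAt rho' x₀)
    (hreal : RealizesAt rho x₀ lam) (hreal' : RealizesAt rho' x₀ lam) :
    ∃ h : Equiv.Perm ℝ, StrictMono ⇑h ∧ h x₀ = x₀ ∧
      ∀ (g : G) (x : ℝ), h (rho g x) = rho' g (h x) :=
  dynamical_realization_unique_up_to_conjugacy_general lam x₀ rho rho' hmono hmono' htight htight'
    hreal hreal'
end

section
/- Let G be a countable group and λ a left order on G which is indiscrete, i.e., there is no λ-minimal element among {g : e <_λ g}. If ρ : G → Homeo₊(ℝ) is tight at x₀ and realizes λ at x₀, then the orbit ρ(G)x₀ is dense in ℝ. -/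
/-- If `λ` is an indiscrete left order on a countable group `G` (there is
no `λ`-minimal element among the `λ`-positive elements) and `ρ` is tight at `x₀` and
realizes `λ` at `x₀`, then the orbit of `x₀` is dense in `ℝ`. -/
theorem indiscrete_order_dense_orbit
    {G : Type*} [Group G] [Countable G] (lam : LeftOrder G)
    (hind : ¬ ∃ g : G, lam.lt 1 g ∧ ∀ g' : G, lam.lt 1 g' → g = g' ∨ lam.lt g g')
    (rho : G →* Equiv.Perm ℝ) (hmono : ∀ g : G, StrictMono ⇑(rho g)) (x₀ : ℝ)
    (htight : IsTightAt rho x₀) (hreal : RealizesAt rho x₀ lam) :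
    Dense (orbitSet rho x₀) := by
  obtain ⟨hstab, hbb, hba, hgap⟩ := htight
  by_contra hnd
  rw [dense_iff_closure_eq] at hnd
  have hy : ∃ y : ℝ, y ∉ closure (orbitSet rho x₀) := by
    by_contra h
    push_neg at h
    exact hnd (Set.eq_univ_of_forall h)
  obtain ⟨y, hy⟩ := hy
  set C := closure (orbitSet rho x₀) with hC
  have hCc : IsClosed C := isClosed_closure
  -- below and above
  have hAne : (C ∩ Set.Iic y).Nonempty := by
    rw [bddBelow_def] at hbb
    push_neg at hbb
    obtain ⟨z, hz, hzy⟩ := hbb y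
    exact ⟨z, subset_closure hz, le_of_lt hzy⟩
  have hBne : (C ∩ Set.Ici y).Nonempty := by
    rw [bddAbove_def] at hba
    push_neg at hba
    obtain ⟨z, hz, hzy⟩ := hba y
    exact ⟨z, subset_closure hz, le_of_lt hzy⟩
  set a := sSup (C ∩ Set.Iic y) with ha
  set b := sInf (C ∩ Set.Ici y) with hb
  have haMem : a ∈ C ∩ Set.Iic y :=
    (hCc.inter isClosed_Iic).csSup_mem hAne ⟨y, fun z hz => hz.2⟩
  have hbMem : b ∈ C ∩ Set.Ici y :=
    (hCc.inter isClosed_Ici).csInf_mem hBne ⟨y, fun z hz => hz.2⟩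
  have hay : a < y := lt_of_le_of_ne haMem.2 (fun h => hy (by rw [← h]; exact haMem.1))
  have hyb : y < b := lt_of_le_of_ne hbMem.2 (fun h : y = b => hy (by rw [h]; exact hbMem.1))
  have hab : a < b := hay.trans hyb
  have hkey : C ∩ Set.Icc a b = {a, b} := by
    apply Set.Subset.antisymm
    · rintro z ⟨hzC, hza, hzb⟩
      rcases le_or_gt z y with h | h
      · left
        exact le_antisymm (le_csSup ⟨y, fun w hw => hw.2⟩ ⟨hzC, h⟩) hza
      · right
        exact le_antisymm hzb (csInf_le ⟨y, fun w hw => hw.2⟩ ⟨hzC, le_of_lt h⟩)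
    · rintro z (rfl | rfl)
      · exact ⟨haMem.1, le_refl _, le_of_lt hab⟩
      · exact ⟨hbMem.1, le_of_lt hab, le_refl _⟩
  obtain ⟨⟨f, hf⟩, ⟨g, hg⟩⟩ := hgap a b hab hkey
  simp only at hf hg
  -- the element f⁻¹ * g is a minimal positive element
  have hfg : lam.lt f g := (hreal f g).2 (by rw [hf, hg]; exact hab)
  have hk : lam.lt 1 (f⁻¹ * g) := by
    have := lam.mul_left f g f⁻¹
    rw [inv_mul_cancel] at this
    exact this hfg
  apply hind
  refine ⟨f⁻¹ * g, hk, fun h hh => ?_⟩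
  by_contra hcon
  push_neg at hcon
  obtain ⟨hne, hnlt⟩ := hcon
  have hlt : lam.lt h (f⁻¹ * g) := by
    rcases lam.total _ _ (Ne.symm hne) with h1 | h1
    · exact h1
    · exact absurd h1 hnlt
  -- then rho (f*h) x₀ is an orbit point strictly between a and b
  have h1 : x₀ < rho h x₀ := by
    have := (hreal 1 h).1 hh
    rwa [map_one] at this
  have h2 : rho h x₀ < rho (f⁻¹ * g) x₀ := (hreal _ _).1 hlt
  have hmem : rho (f * h) x₀ ∈ orbitSet rho x₀ := ⟨f * h, rfl⟩
  have e1 : a < rho (f * h) x₀ := by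
    have := hmono f h1
    rw [map_mul, Equiv.Perm.mul_apply, ← hf]
    exact this
  have e2 : rho (f * h) x₀ < b := by
    have := hmono f h2
    rw [map_mul, Equiv.Perm.mul_apply]
    have e : rho f (rho (f⁻¹ * g) x₀) = b := by
      rw [← Equiv.Perm.mul_apply, ← map_mul, mul_inv_cancel_left, hg]
    rw [← e]
    exact this
  have : rho (f * h) x₀ ∈ C ∩ Set.Icc a b :=
    ⟨subset_closure hmem, le_of_lt e1, le_of_lt e2⟩
  rw [hkey] at this
  rcases this with h | h
  · exact absurd h (ne_of_gt e1)
  · exact absurd h (ne_of_lt e2)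
end
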